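/- arXiv:2406.03021 — 4 statements merged into one kernel-verified Lean document; each statement's English description precedes it below -/
import Mathlib

section
/- For every n×n real matrix S, with x, Ω(x), M(S), D and D̃ defined from S as in the context, and assuming x is the response matrix of an electrical network (in particular x is symmetric and each of its rows sums to zero), the matrix identity M(S)·D·(Ω(x)·D̃)ᵀ = 0 holds; that is, the subspaces of ℝ^{2n} spanned by the rows of M(S)·D and by the rows of Ω(x)·D̃ are orthogonal with respect to the standard bilinear form. -/
open Matrix

noncomputable section

/-- The matrix `x` defined from `S` by `x_{ij} = S_{j,i} - S_{j,i-1}` (second index cyclic,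
with the convention `S_{j,0} = S_{j,n}`); everything is written 0-indexed. -/
def xOf (n : ℕ) (S : Matrix (Fin n) (Fin n) ℝ) : Matrix (Fin n) (Fin n) ℝ :=
  fun a b =>
    S b a - S b (if a.val = 0 then ⟨n - 1, by have := b.isLt; omega⟩
                 else ⟨a.val - 1, by have := a.isLt; omega⟩)

/-- The `n × 2n` matrix `Ω(x)` (0-indexed reformulation of the 1-indexed description):
`Ω(x)[i,2j-1] = (-1)^{i+j} x_{ij}`, `Ω(x)[1,2] = 1`, `Ω(x)[1,2n] = (-1)^n`,
`Ω(x)[i,2i-2] = Ω(x)[i,2i] = 1` for `2 ≤ i ≤ n`, all other even-column entries `0`. -/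
def OmegaMat (n : ℕ) (x : Matrix (Fin n) (Fin n) ℝ) : Matrix (Fin n) (Fin (2 * n)) ℝ :=
  fun r c =>
    if c.val % 2 = 0 then
      (-1 : ℝ) ^ (r.val + c.val / 2) * x r ⟨c.val / 2, by have := c.isLt; omega⟩
    else if r.val = 0 then
      (if c.val = 1 then (1 : ℝ) else if c.val = 2 * n - 1 then (-1 : ℝ) ^ n else 0)
    else
      (if c.val = 2 * r.val - 1 ∨ c.val = 2 * r.val + 1 then (1 : ℝ) else 0)

/-- The `(n+1) × 2n` matrix `M(S)`: first row `(0,1,0,1,…,0,1)`; row `i+1` has a `1` in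
column `2i-1`, entries `S_{ij}` in the even columns `2j`, and `0` elsewhere. -/
def MMat (n : ℕ) (S : Matrix (Fin n) (Fin n) ℝ) : Matrix (Fin (n + 1)) (Fin (2 * n)) ℝ :=
  fun r c =>
    if r.val = 0 then (if c.val % 2 = 1 then (1 : ℝ) else 0)
    else if c.val % 2 = 1 then
      S ⟨r.val - 1, by have := r.isLt; have := c.isLt; omega⟩
        ⟨c.val / 2, by have := c.isLt; omega⟩
    else if c.val + 2 = 2 * r.val then 1 else 0

/-- `D = diag(1,1,-1,-1,1,1,…)`. -/
def Dmat (n : ℕ) : Matrix (Fin (2 * n)) (Fin (2 * n)) ℝ :=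
  Matrix.diagonal fun k => (-1 : ℝ) ^ (k.val / 2)

/-- `D̃ = diag(-1,1,-1,1,…)`, i.e. `D̃[k,k] = (-1)^k` (1-indexed). -/
def Dtil (n : ℕ) : Matrix (Fin (2 * n)) (Fin (2 * n)) ℝ :=
  Matrix.diagonal fun k => (-1 : ℝ) ^ (k.val + 1)

/-- The `2n × 2n` skew-symmetric tridiagonal matrix `Λ_{2n}` with
`Λ[i,i+1] = (-1)^{i+1}` and `Λ[i+1,i] = (-1)^i` (1-indexed). -/
def LambdaMat (n : ℕ) : Matrix (Fin (2 * n)) (Fin (2 * n)) ℝ :=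
  fun a b =>
    if b.val = a.val + 1 then (-1 : ℝ) ^ a.val
    else if a.val = b.val + 1 then (-1 : ℝ) ^ (b.val + 1)
    else 0

end
private lemma sum_range_two_mul' (f : ℕ → ℝ) (n : ℕ) :
    ∑ c ∈ Finset.range (2 * n), f c
      = ∑ j ∈ Finset.range n, (f (2 * j) + f (2 * j + 1)) := by
  induction n with
  | zero => simp
  | succ m ih =>
    rw [show 2 * (m + 1) = (2 * m + 1) + 1 by ring, Finset.sum_range_succ,
      Finset.sum_range_succ, ih, Finset.sum_range_succ]
    ring

private lemma neg_one_pow_sq (k : ℕ) : (-1 : ℝ) ^ k * (-1 : ℝ) ^ k = 1 := by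
  rw [← pow_add]
  exact Even.neg_one_pow ⟨k, rfl⟩

private lemma neg_one_pow_even' (k : ℕ) : (-1 : ℝ) ^ (2 * k) = 1 := by
  rw [pow_mul]; norm_num

private lemma neg_one_pow_odd' (k : ℕ) : (-1 : ℝ) ^ (2 * k + 1) = -1 := by
  rw [pow_succ, neg_one_pow_even']; ring

theorem orthogonality_of_embeddings (n : ℕ) (hn : 2 ≤ n) (S : Matrix (Fin n) (Fin n) ℝ)
    (hsymm : (xOf n S).IsSymm) (hrow : ∀ i, ∑ j, xOf n S i j = 0) :
    MMat n S * Dmat n * (OmegaMat n (xOf n S) * Dtil n)ᵀ = 0 := by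
  ext r s
  set F : ℕ → ℝ := fun c =>
    if h : c < 2 * n then
      (MMat n S r ⟨c, h⟩ * (-1 : ℝ) ^ (c / 2)) *
        (OmegaMat n (xOf n S) s ⟨c, h⟩ * (-1 : ℝ) ^ (c + 1))
    else 0 with hF
  have h1 : (MMat n S * Dmat n * (OmegaMat n (xOf n S) * Dtil n)ᵀ) r s
      = ∑ c ∈ Finset.range (2 * n), F c := by
    rw [← Fin.sum_univ_eq_sum_range F (2 * n), Matrix.mul_apply]
    refine Finset.sum_congr rfl fun c _ => ?_
    rw [Matrix.transpose_apply]
    simp only [Dmat, Dtil, Matrix.mul_diagonal, hF]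
    rw [dif_pos c.isLt]
  rw [Matrix.zero_apply, h1, sum_range_two_mul']
  have heval : ∀ j (hj : j < n),
      F (2 * j) =
        (if (r : ℕ) = 0 then (0:ℝ)
          else if 2 * j + 2 = 2 * (r : ℕ) then 1 else 0) * (-1) ^ j *
          ((-1) ^ ((s : ℕ) + j) * xOf n S s ⟨j, hj⟩ * (-1)) := by
    intro j hj
    have hb1 : 2 * j < 2 * n := by omega
    have e1 : 2 * j % 2 = 0 := by omega
    have e3 : 2 * j / 2 = j := by omega
    simp only [hF, dif_pos hb1]
    simp only [MMat, OmegaMat, e1, e3, reduceIte]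
    rw [if_neg (show ¬(0:ℕ) = 1 by omega), if_neg (show ¬(0:ℕ) = 1 by omega),
      neg_one_pow_odd' j]
  have hoval : ∀ j (hj : j < n),
      F (2 * j + 1) =
        (if (r : ℕ) = 0 then (1:ℝ)
          else S ⟨(r : ℕ) - 1, by have := r.isLt; omega⟩ ⟨j, hj⟩) * (-1) ^ j *
          (if (s : ℕ) = 0 then
              (if 2 * j + 1 = 1 then (1:ℝ)
                else if 2 * j + 1 = 2 * n - 1 then (-1) ^ n else 0)
            else if 2 * j + 1 = 2 * (s : ℕ) - 1 ∨ 2 * j + 1 = 2 * (s : ℕ) + 1 then 1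
              else 0) := by
    intro j hj
    have hb2 : 2 * j + 1 < 2 * n := by omega
    have e2 : (2 * j + 1) % 2 = 1 := by omega
    have e4 : (2 * j + 1) / 2 = j := by omega
    simp only [hF, dif_pos hb2]
    simp only [MMat, OmegaMat, e2, e4, reduceIte]
    rw [if_neg (show ¬(1:ℕ) = 0 by omega),
      show 2 * j + 1 + 1 = 2 * (j + 1) by ring, neg_one_pow_even']
    ring
  by_cases hr : (r : ℕ) = 0
  · have heven : ∀ j, j < n → F (2 * j) = 0 := by
      intro j hj
      rw [heval j hj, if_pos hr]
      ring
    by_cases hs : (s : ℕ) = 0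
    · have key : ∀ j ∈ Finset.range n, F (2 * j) + F (2 * j + 1)
          = (if j = 0 then (1:ℝ) else 0)
            + (if j = n - 1 then (-1:ℝ) ^ (2 * n - 1) else 0) := by
        intro j hj
        rw [Finset.mem_range] at hj
        rw [heven j hj, hoval j hj, if_pos hr, if_pos hs, zero_add]
        by_cases hj0 : j = 0
        · rw [if_pos (by omega), if_pos hj0, if_neg (by omega), hj0]
          norm_num
        · rw [if_neg (by omega), if_neg hj0]
          by_cases hjn : j = n - 1
          · rw [if_pos (by omega), if_pos hjn, hjn,
              show 2 * n - 1 = (n - 1) + n by omega, pow_add]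
            ring
          · rw [if_neg (by omega), if_neg hjn]
            ring
      rw [Finset.sum_congr rfl key, Finset.sum_add_distrib,
        Finset.sum_ite_eq' (Finset.range n) 0 (fun _ => (1:ℝ)),
        Finset.sum_ite_eq' (Finset.range n) (n-1) (fun _ => (-1:ℝ) ^ (2 * n - 1)),
        if_pos (by rw [Finset.mem_range]; omega),
        if_pos (by rw [Finset.mem_range]; omega),
        (Odd.neg_one_pow ⟨n - 1, by omega⟩ : (-1:ℝ) ^ (2 * n - 1) = -1)]
      ring
    · have key : ∀ j ∈ Finset.range n, F (2 * j) + F (2 * j + 1)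
          = (if j = (s:ℕ) - 1 then (-1:ℝ) ^ ((s:ℕ) - 1) else 0)
            + (if j = (s:ℕ) then (-1:ℝ) ^ (s:ℕ) else 0) := by
        intro j hj
        rw [Finset.mem_range] at hj
        rw [heven j hj, hoval j hj, if_pos hr, if_neg hs, zero_add]
        have hs1 : 1 ≤ (s:ℕ) := by omega
        by_cases hj1 : j = (s:ℕ) - 1
        · rw [if_pos (Or.inl (by omega)), if_pos hj1, if_neg (by omega), hj1]
          ring
        · by_cases hj2 : j = (s:ℕ)
          · rw [if_pos (Or.inr (by omega)), if_neg hj1, if_pos hj2, hj2]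
            ring
          · rw [if_neg (by omega), if_neg hj1, if_neg hj2]
            ring
      rw [Finset.sum_congr rfl key, Finset.sum_add_distrib,
        Finset.sum_ite_eq' (Finset.range n) ((s:ℕ) - 1) (fun _ => (-1:ℝ) ^ ((s:ℕ) - 1)),
        Finset.sum_ite_eq' (Finset.range n) (s:ℕ) (fun _ => (-1:ℝ) ^ (s:ℕ)),
        if_pos (by rw [Finset.mem_range]; have := s.isLt; omega),
        if_pos (by rw [Finset.mem_range]; exact s.isLt)]
      have h3 : (-1:ℝ) ^ (s:ℕ) = (-1:ℝ) ^ ((s:ℕ) - 1) * (-1) := by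
        conv_lhs => rw [show (s:ℕ) = (s:ℕ) - 1 + 1 by omega]
        rw [pow_succ]
      rw [h3]; ring
  · have hp : (r:ℕ) - 1 < n := by have := r.isLt; omega
    have heven : ∀ j, j < n → F (2 * j) =
        (if j = (r:ℕ) - 1 then -((-1:ℝ) ^ (s:ℕ) * xOf n S s ⟨(r:ℕ) - 1, hp⟩) else 0) := by
      intro j hj
      rw [heval j hj, if_neg hr]
      by_cases hjp : j = (r:ℕ) - 1
      · rw [if_pos (by omega), if_pos hjp]
        subst hjp
        rw [pow_add]
        linear_combination
          (-((-1:ℝ) ^ (s:ℕ) * xOf n S s ⟨(r:ℕ) - 1, hp⟩)) * neg_one_pow_sq ((r:ℕ) - 1)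
      · rw [if_neg (by omega), if_neg hjp]
        ring
    by_cases hs : (s : ℕ) = 0
    · have hs0 : s = ⟨0, by omega⟩ := Fin.ext hs
      have key : ∀ j ∈ Finset.range n, F (2 * j) + F (2 * j + 1)
          = (if j = (r:ℕ) - 1 then -((-1:ℝ) ^ (s:ℕ) * xOf n S s ⟨(r:ℕ) - 1, hp⟩) else 0)
            + ((if j = 0 then S ⟨(r:ℕ) - 1, hp⟩ ⟨0, by omega⟩ else 0)
              + (if j = n - 1 then -(S ⟨(r:ℕ) - 1, hp⟩ ⟨n - 1, by omega⟩) else 0)) := by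
        intro j hj
        rw [Finset.mem_range] at hj
        rw [heven j hj, hoval j hj, if_neg hr, if_pos hs]
        congr 1
        by_cases hj0 : j = 0
        · subst hj0
          rw [if_pos (by omega), if_pos rfl, if_neg (by omega)]
          norm_num
        · rw [if_neg (by omega), if_neg hj0]
          by_cases hjn : j = n - 1
          · subst hjn
            rw [if_pos (by omega), if_pos rfl]
            have h2 : (-1:ℝ) ^ (n - 1) * (-1:ℝ) ^ n = -1 := by
              rw [← pow_add]
              exact Odd.neg_one_pow ⟨n - 1, by omega⟩
            linear_combination S ⟨(r:ℕ) - 1, hp⟩ ⟨n - 1, by omega⟩ * h2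
          · rw [if_neg (by omega), if_neg hjn]
            ring
      rw [Finset.sum_congr rfl key, Finset.sum_add_distrib, Finset.sum_add_distrib,
        Finset.sum_ite_eq' (Finset.range n) ((r:ℕ) - 1)
          (fun _ => -((-1:ℝ) ^ (s:ℕ) * xOf n S s ⟨(r:ℕ) - 1, hp⟩)),
        Finset.sum_ite_eq' (Finset.range n) 0 (fun _ => S ⟨(r:ℕ) - 1, hp⟩ ⟨0, by omega⟩),
        Finset.sum_ite_eq' (Finset.range n) (n - 1)
          (fun _ => -(S ⟨(r:ℕ) - 1, hp⟩ ⟨n - 1, by omega⟩)),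
        if_pos (by rw [Finset.mem_range]; omega),
        if_pos (by rw [Finset.mem_range]; omega),
        if_pos (by rw [Finset.mem_range]; omega)]
      simp only [xOf]
      rw [if_pos hs, hs, hs0]
      ring
    · have key : ∀ j ∈ Finset.range n, F (2 * j) + F (2 * j + 1)
          = (if j = (r:ℕ) - 1 then -((-1:ℝ) ^ (s:ℕ) * xOf n S s ⟨(r:ℕ) - 1, hp⟩) else 0)
            + ((if j = (s:ℕ) - 1 then
                  (-1:ℝ) ^ ((s:ℕ) - 1) *
                    S ⟨(r:ℕ) - 1, hp⟩ ⟨(s:ℕ) - 1, by have := s.isLt; omega⟩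
                else 0)
              + (if j = (s:ℕ) then (-1:ℝ) ^ (s:ℕ) * S ⟨(r:ℕ) - 1, hp⟩ ⟨(s:ℕ), s.isLt⟩
                else 0)) := by
        intro j hj
        rw [Finset.mem_range] at hj
        rw [heven j hj, hoval j hj, if_neg hr, if_neg hs]
        congr 1
        have hs1 : 1 ≤ (s:ℕ) := by omega
        by_cases hj1 : j = (s:ℕ) - 1
        · subst hj1
          rw [if_pos (Or.inl (by omega)), if_pos rfl, if_neg (by omega)]
          ring
        · by_cases hj2 : j = (s:ℕ)
          · subst hj2
            rw [if_pos (Or.inr (by omega)), if_neg hj1, if_pos rfl]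
            ring
          · rw [if_neg (by omega), if_neg hj1, if_neg hj2]
            ring
      rw [Finset.sum_congr rfl key, Finset.sum_add_distrib, Finset.sum_add_distrib,
        Finset.sum_ite_eq' (Finset.range n) ((r:ℕ) - 1)
          (fun _ => -((-1:ℝ) ^ (s:ℕ) * xOf n S s ⟨(r:ℕ) - 1, hp⟩)),
        Finset.sum_ite_eq' (Finset.range n) ((s:ℕ) - 1)
          (fun _ => (-1:ℝ) ^ ((s:ℕ) - 1) *
            S ⟨(r:ℕ) - 1, hp⟩ ⟨(s:ℕ) - 1, by have := s.isLt; omega⟩),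
        Finset.sum_ite_eq' (Finset.range n) ((s:ℕ))
          (fun _ => (-1:ℝ) ^ ((s:ℕ)) * S ⟨(r:ℕ) - 1, hp⟩ ⟨(s:ℕ), s.isLt⟩),
        if_pos (by rw [Finset.mem_range]; omega),
        if_pos (by rw [Finset.mem_range]; have := s.isLt; omega),
        if_pos (by rw [Finset.mem_range]; exact s.isLt)]
      simp only [xOf]
      rw [if_neg hs]
      have h3 : (-1:ℝ) ^ (s:ℕ) = (-1:ℝ) ^ ((s:ℕ) - 1) * (-1) := by
        conv_lhs => rw [show (s:ℕ) = (s:ℕ) - 1 + 1 by omega]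
        rw [pow_succ]
      rw [h3]
      ring
end

section
/- Let x be an n×n real symmetric matrix each of whose rows sums to zero (for instance the response matrix of an electrical network). Then the 2n×2n matrix Λ_{2n} is invertible and Ω(x)·Λ_{2n}⁻¹·Ω(x)ᵀ = 0; that is, the row space of Ω(x) is isotropic with respect to the skew-symmetric form Λ_{2n}⁻¹. -/
open Matrix

/-!
Write a vector of `ℝ^{2n}` as the signed interleaving `((-1)^a p_a, (-1)^a q_a)_a` of two vectors
`p, q ∈ ℝ^n`. In these coordinates the explicit inverse of `Λ_{2n}` is the pairing
`(p, q), (p', q') ↦ p'ᵀ U q - pᵀ U q'`, where `U` is the upper triangular matrix of ones.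
Row `r` of `Ω(x)` is `(-1)^r` times the interleaving of `x_r` and `e_r - e_{r-1}` (indices mod `n`),
and `x_rᵀ U (e_s - e_{s-1}) = x_{rs}` because the rows of `x` sum to zero. So the `(r, s)` entry of
`Ω Λ⁻¹ Ωᵀ` is `±(x_{sr} - x_{rs})`, which vanishes by symmetry.
-/

open Finset

section

variable {n : ℕ}

def evenIdx (a : Fin n) : Fin (2 * n) := ⟨2 * a, by omega⟩

def oddIdx (a : Fin n) : Fin (2 * n) := ⟨2 * a + 1, by omega⟩

lemma sum_fin_two_mul {M : Type*} [AddCommMonoid M] (f : Fin (2 * n) → M) :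
    ∑ c, f c = ∑ a, (f (evenIdx a) + f (oddIdx a)) := by
  rw [← ((finProdFinEquiv (m := n) (n := 2)).trans (finCongr (mul_comm n 2))).sum_comp,
    Fintype.sum_prod_type]
  refine sum_congr rfl fun a _ => ?_
  rw [Fin.sum_univ_two]
  congr 1 <;> congr 1 <;> ext <;> simp [finProdFinEquiv, evenIdx, oddIdx, add_comm]

lemma exists_eq_evenIdx_or_oddIdx (c : Fin (2 * n)) :
    (∃ a, c = evenIdx a) ∨ ∃ a, c = oddIdx a := by
  rcases Nat.even_or_odd' c.val with ⟨a, ha | ha⟩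
  · exact .inl ⟨⟨a, by omega⟩, Fin.ext ha⟩
  · exact .inr ⟨⟨a, by omega⟩, Fin.ext ha⟩

def lambdaInvEntry (c d : ℕ) : ℝ :=
  if c % 2 = 0 ∧ d % 2 = 1 ∧ c < d then (-1) ^ (c / 2 + d / 2 + 1)
  else if c % 2 = 1 ∧ d % 2 = 0 ∧ d < c then (-1) ^ (c / 2 + d / 2)
  else 0

def lambdaInv (n : ℕ) : Matrix (Fin (2 * n)) (Fin (2 * n)) ℝ :=
  of fun c d => lambdaInvEntry c d

lemma sum_range_ite_succ_eq (N i : ℕ) (hi : i ≤ N) (g : ℕ → ℝ) :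
    ∑ m ∈ range N, (if m + 1 = i then g m else 0) = if 0 < i then g (i - 1) else 0 := by
  cases i with
  | zero => simp
  | succ j => simp [Nat.succ_lt_succ_iff.mp (Nat.lt_succ_of_le hi)]

lemma LambdaMat_mul_lambdaInv (n : ℕ) : LambdaMat n * lambdaInv n = 1 := by
  ext i k
  have hi := i.isLt
  have hk := k.isLt
  have hrow : (LambdaMat n * lambdaInv n) i k = ∑ m ∈ range (2 * n),
      ((if m = i + 1 then (-1) ^ i.val * lambdaInvEntry m k else 0) +
        if m + 1 = i then (-1) ^ i.val * lambdaInvEntry m k else 0) := by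
    rw [mul_apply, ← Fin.sum_univ_eq_sum_range]
    refine sum_congr rfl fun j _ => ?_
    simp only [LambdaMat, lambdaInv, of_apply]
    split_ifs <;> first | omega | rw [zero_add, ‹(i : ℕ) = j + 1›] | simp
  rw [hrow, sum_add_distrib, sum_ite_eq', sum_range_ite_succ_eq _ _ hi.le, one_apply]
  simp only [mem_range, lambdaInvEntry, Fin.ext_iff, neg_one_pow_eq_ite, Nat.even_iff]
  split_ifs <;> first | omega | norm_num

@[simp] lemma lambdaInv_evenIdx_evenIdx (a b : Fin n) :
    lambdaInv n (evenIdx a) (evenIdx b) = 0 := by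
  simp [lambdaInv, lambdaInvEntry, evenIdx]

@[simp] lemma lambdaInv_oddIdx_oddIdx (a b : Fin n) :
    lambdaInv n (oddIdx a) (oddIdx b) = 0 := by
  simp [lambdaInv, lambdaInvEntry, oddIdx]

lemma lambdaInv_evenIdx_oddIdx (a b : Fin n) :
    lambdaInv n (evenIdx a) (oddIdx b) = if a ≤ b then (-1) ^ (a.val + b.val + 1) else 0 := by
  have h₁ : (2 * a.val) / 2 = a.val := by omega
  have h₂ : (2 * b.val + 1) / 2 = b.val := by omega
  simp only [lambdaInv, lambdaInvEntry, evenIdx, oddIdx, of_apply, h₁, h₂, Fin.le_def]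
  split_ifs <;> first | rfl | omega

lemma lambdaInv_oddIdx_evenIdx (a b : Fin n) :
    lambdaInv n (oddIdx a) (evenIdx b) = if b ≤ a then (-1) ^ (a.val + b.val) else 0 := by
  have h₁ : (2 * b.val) / 2 = b.val := by omega
  have h₂ : (2 * a.val + 1) / 2 = a.val := by omega
  simp only [lambdaInv, lambdaInvEntry, evenIdx, oddIdx, of_apply, h₁, h₂, Fin.le_def]
  split_ifs <;> first | rfl | omega

def altInterleave (p q : Fin n → ℝ) : Fin (2 * n) → ℝ := fun c =>
  (-1) ^ (c.val / 2) * if c.val % 2 = 0 then p ⟨c / 2, by omega⟩ else q ⟨c / 2, by omega⟩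

@[simp] lemma altInterleave_evenIdx (p q : Fin n → ℝ) (a : Fin n) :
    altInterleave p q (evenIdx a) = (-1) ^ a.val * p a := by
  simp [altInterleave, evenIdx]

@[simp] lemma altInterleave_oddIdx (p q : Fin n → ℝ) (a : Fin n) :
    altInterleave p q (oddIdx a) = (-1) ^ a.val * q a := by
  have : (2 * a.val + 1) / 2 = a.val := by omega
  simp [altInterleave, oddIdx, this]

def upperOnes (n : ℕ) : Matrix (Fin n) (Fin n) ℝ := of fun a b => if a ≤ b then 1 else 0

lemma altInterleave_dotProduct_lambdaInv_mulVec (p q p' q' : Fin n → ℝ) :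
    altInterleave p q ⬝ᵥ lambdaInv n *ᵥ altInterleave p' q' =
      p' ⬝ᵥ upperOnes n *ᵥ q - p ⬝ᵥ upperOnes n *ᵥ q' := by
  simp only [dotProduct, mulVec, sum_fin_two_mul, sum_add_distrib, mul_add, mul_sum,
    altInterleave_evenIdx, altInterleave_oddIdx, lambdaInv_evenIdx_evenIdx,
    lambdaInv_oddIdx_oddIdx, lambdaInv_evenIdx_oddIdx, lambdaInv_oddIdx_evenIdx, zero_mul,
    mul_zero, sum_const_zero, zero_add, add_zero, upperOnes, of_apply]
  rw [sub_eq_add_neg, ← sum_neg_distrib, sum_comm (f := fun a b => p' a * _)]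
  congr 1 <;> refine sum_congr rfl fun a _ => ?_
  · refine sum_congr rfl fun b _ => ?_
    split_ifs
    · rw [pow_add]; ring_nf; simp
    · simp
  · rw [← sum_neg_distrib]
    refine sum_congr rfl fun b _ => ?_
    split_ifs
    · rw [pow_add, pow_add]; ring_nf; simp
    · simp

lemma val_finRotate_symm (s : Fin n) :
    ((finRotate n).symm s).val = if s.val = 0 then n - 1 else s.val - 1 := by
  obtain ⟨m, rfl⟩ : ∃ m, n = m + 1 := ⟨n - 1, by have := s.pos; omega⟩
  rw [finRotate_symm_apply, Fin.coe_sub_one]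
  simp only [Fin.ext_iff, Fin.val_zero, Nat.add_sub_cancel]

def cycDiff (s : Fin n) : Fin n → ℝ := Pi.single s 1 - Pi.single ((finRotate n).symm s) 1

lemma dotProduct_upperOnes_mulVec_cycDiff {p : Fin n → ℝ} (hp : ∑ a, p a = 0) (s : Fin n) :
    p ⬝ᵥ upperOnes n *ᵥ cycDiff s = p s := by
  have hpred := val_finRotate_symm s
  have key : ∀ a, p a * (upperOnes n *ᵥ cycDiff s) a =
      (if a = s then p a else 0) - if s.val = 0 then p a else 0 := by
    intro a
    have := a.isLt
    simp only [cycDiff, mulVec_sub, mulVec_single_one, Pi.sub_apply, col_apply, upperOnes,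
      of_apply, Fin.le_def, Fin.ext_iff, hpred]
    split_ifs <;> first | omega | ring
  simp only [dotProduct, key, sum_sub_distrib, sum_ite_eq', mem_univ, if_true]
  split_ifs <;> simp [hp]

lemma OmegaMat_eq_smul_altInterleave (hn : 2 ≤ n) (x : Matrix (Fin n) (Fin n) ℝ) (r : Fin n) :
    OmegaMat n x r = (-1) ^ r.val • altInterleave (x r) (cycDiff r) := by
  funext c
  rcases exists_eq_evenIdx_or_oddIdx c with ⟨a, rfl⟩ | ⟨b, rfl⟩
  · have h : (2 * a.val) / 2 = a.val := by omega
    rw [Pi.smul_apply, altInterleave_evenIdx]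
    simp [OmegaMat, evenIdx, h, pow_add, mul_assoc]
  · have := r.isLt
    have hodd : (2 * b.val + 1) % 2 ≠ 0 := by omega
    have hpred := val_finRotate_symm r
    rw [Pi.smul_apply, altInterleave_oddIdx]
    simp only [OmegaMat, oddIdx, if_neg hodd, cycDiff, Pi.sub_apply, Pi.single_apply, Fin.ext_iff,
      hpred, neg_one_pow_eq_ite, Nat.even_iff]
    by_cases hr : r.val = 0
    · simp only [hr, if_true]
      split_ifs <;> first | omega | norm_num
    · have e : (2 * b.val + 1 = 2 * r.val - 1 ∨ 2 * b.val + 1 = 2 * r.val + 1) ↔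
          (b.val = r.val - 1 ∨ b.val = r.val) := by omega
      simp only [hr, if_false, e, ite_or]
      split_ifs <;> first | omega | norm_num

end

theorem omega_isotropic (n : ℕ) (hn : 2 ≤ n) (x : Matrix (Fin n) (Fin n) ℝ)
    (hsymm : x.IsSymm) (hrow : ∀ i, ∑ j, x i j = 0) :
    IsUnit (LambdaMat n) ∧ OmegaMat n x * (LambdaMat n)⁻¹ * (OmegaMat n x)ᵀ = 0 := by
  have hinv := LambdaMat_mul_lambdaInv n
  refine ⟨(isUnit_iff_isUnit_det _).mpr (isUnit_det_of_right_inverse hinv), ?_⟩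
  ext r s
  rw [inv_eq_right_inv hinv, Matrix.mul_assoc]
  change OmegaMat n x r ⬝ᵥ lambdaInv n *ᵥ OmegaMat n x s = 0
  rw [OmegaMat_eq_smul_altInterleave hn x r, OmegaMat_eq_smul_altInterleave hn x s,
    smul_dotProduct, mulVec_smul, dotProduct_smul, altInterleave_dotProduct_lambdaInv_mulVec,
    dotProduct_upperOnes_mulVec_cycDiff (hrow s), dotProduct_upperOnes_mulVec_cycDiff (hrow r),
    hsymm.apply, sub_self, smul_zero, smul_zero]
end

section
/- (Self-adjointness of the Lam generators with respect to the partition pairing.) For all non-crossing partitions τ, σ of {1̄,…,n̄} and every i ∈ {1,…,2n}, one has (if i is non-isolated in τ then ⟨g_iτ, σ⟩ else 0) = (if i is non-isolated in σ then ⟨τ, g_iσ⟩ else 0). Equivalently, with 𝔲_i·w_τ := w_{g_iτ} when i is non-isolated in τ and 𝔲_i·w_τ := 0 when i is isolated in τ, the identity ⟨𝔲_i w_τ, w_σ⟩ = ⟨w_τ, 𝔲_i w_σ⟩ holds for every Lam algebra generator 𝔲_i, and hence for every element of the Lie algebra they generate. -/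
open scoped Classical

noncomputable section

/-- `P` is a set partition of the finite ground set `G` (of integers): its blocks are nonempty
subsets of `G`, and every element of `G` lies in exactly one block. -/
def IsPartitionOf (G : Finset ℕ) (P : Finset (Finset ℕ)) : Prop :=
  (∀ B ∈ P, B.Nonempty) ∧ (∀ B ∈ P, B ⊆ G) ∧ ∀ x ∈ G, ∃! B, B ∈ P ∧ x ∈ B

/-- A collection of blocks is non-crossing: there are no `a < b < c < d` with `a, c` in one
block and `b, d` in a different block. -/
def NonCrossing (P : Finset (Finset ℕ)) : Prop :=
  ∀ a b c d : ℕ, a < b → b < c → c < d →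
    ∀ B₁ ∈ P, ∀ B₂ ∈ P, a ∈ B₁ → c ∈ B₁ → b ∈ B₂ → d ∈ B₂ → B₁ = B₂

/-- The set `{1, 3, …, 2n-1}` of "barred" boundary indices `k̄ = 2k-1`. -/
def oddSet (n : ℕ) : Finset ℕ := (Finset.range n).image fun k => 2 * k + 1

/-- The set `{2, 4, …, 2n}` of "tilde" boundary indices `k̃ = 2k`. -/
def evenSet (n : ℕ) : Finset ℕ := (Finset.range n).image fun k => 2 * k + 2

/-- `σ` is a non-crossing partition of `{1̄,…,n̄}` and `σd` is its dual: a non-crossing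
partition of `{1̃,…,ñ}` such that the merged partition `σ ∪ σd` is non-crossing and the
numbers of blocks add up to `n + 1`. -/
def IsNCPair (n : ℕ) (σ σd : Finset (Finset ℕ)) : Prop :=
  IsPartitionOf (oddSet n) σ ∧ NonCrossing σ ∧
    IsPartitionOf (evenSet n) σd ∧ NonCrossing σd ∧
    NonCrossing (σ ∪ σd) ∧ σ.card + σd.card = n + 1

/-- `i` (for odd `i = 2k-1`) is isolated in `σ` if `{k̄}` is a singleton block of `σ`;
for even `i = 2k`, `i` is isolated in `σ` if `{k̃}` is a singleton block of the dual `σd`. -/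
def IsolatedIn (σ σd : Finset (Finset ℕ)) (i : ℕ) : Prop :=
  if i % 2 = 1 then {i} ∈ σ else {i} ∈ σd

/-- Remove `i` from its block and add `{i}` as a singleton block. -/
def isolate (P : Finset (Finset ℕ)) (i : ℕ) : Finset (Finset ℕ) :=
  insert {i} (P.image fun B => B.erase i)

/-- `(gσ, gσd)` is the result (with its dual) of applying the vertex-isolating operation `g_i`
to the non-crossing partition `σ` with dual `σd`: if `i` is isolated in `σ` then `g_iσ = σ`;
if `i` is odd and non-isolated, `g_iσ` is obtained from `σ` by isolating `i`; if `i` is even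
and non-isolated, `g_iσ` is the partition whose dual is obtained from `σd` by isolating `i`. -/
def GRel (i : ℕ) (σ σd gσ gσd : Finset (Finset ℕ)) : Prop :=
  (IsolatedIn σ σd i → gσ = σ ∧ gσd = σd) ∧
    (¬ IsolatedIn σ σd i →
      (i % 2 = 1 → gσ = isolate σ i) ∧ (i % 2 = 0 → gσd = isolate σd i))

/-- The join of the partitions `τ` and `σ` of `{1̄,…,n̄}` (their finest common coarsening)
consists of a single block: any two points of the ground set are connected by a chain of
blocks of `τ` or `σ`. -/
def JoinConnected (n : ℕ) (τ σ : Finset (Finset ℕ)) : Prop :=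
  ∀ x ∈ oddSet n, ∀ y ∈ oddSet n,
    Relation.ReflTransGen (fun a b => ∃ B, (B ∈ τ ∨ B ∈ σ) ∧ a ∈ B ∧ b ∈ B) x y

/-- The pairing `⟨τ, σ⟩`: equal to `1` if the numbers of blocks of `τ` and `σ` add up to
`n + 1` and the join of `τ` and `σ` has a single block, and `0` otherwise. -/
def pairing (n : ℕ) (τ σ : Finset (Finset ℕ)) : ℝ :=
  if τ.card + σ.card = n + 1 ∧ JoinConnected n τ σ then 1 else 0

end

/-!
For odd `i` the generator isolates `i` in the partition itself. Both pairings vanish unless `i` is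
non-isolated in `τ` and in `σ`, and then each of the two joins (of `g_i τ` with `σ`, and of `τ`
with `g_i σ`) is connected iff the join of `τ` and `σ` with `i` deleted is connected: a path through
`i` can be rerouted through another point of the block of `i` on the other side.

For even `i` the generator acts on the duals, and the pairing can be read off on the dual side:
when the block counts add up to `n + 1`, the join of `τ` and `σ` is connected iff the join of
their duals is. This is proved by induction on `n`: one of `τ, σ` has a singleton block `{x}`;
deleting `x` and `x + 1`, and merging the two dual blocks around `x` in the other partition, gives
an instance of size `n - 1`. The block counts are controlled by the Kreweras bound: a non-crossing
partition of `{1, …, 2n}` into blocks of constant parity has at least `n + 1` blocks.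
-/

open Finset Relation

lemma mem_oddSet {n x : ℕ} : x ∈ oddSet n ↔ x % 2 = 1 ∧ x < 2 * n := by
  simp only [oddSet, mem_image, mem_range]
  constructor
  · rintro ⟨k, hk, rfl⟩; omega
  · rintro ⟨h1, h2⟩; exact ⟨x / 2, by omega, by omega⟩

lemma mem_evenSet {n x : ℕ} : x ∈ evenSet n ↔ x % 2 = 0 ∧ 1 ≤ x ∧ x ≤ 2 * n := by
  simp only [evenSet, mem_image, mem_range]
  constructor
  · rintro ⟨k, hk, rfl⟩; omega
  · rintro ⟨h1, h2⟩; exact ⟨x / 2 - 1, by omega, by omega⟩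

lemma card_oddSet (n : ℕ) : (oddSet n).card = n := by
  rw [oddSet, card_image_of_injective _ (fun a b h => by omega), card_range]

lemma card_evenSet (n : ℕ) : (evenSet n).card = n := by
  rw [evenSet, card_image_of_injective _ (fun a b h => by omega), card_range]

lemma disjoint_oddSet_evenSet (n : ℕ) : Disjoint (oddSet n) (evenSet n) := by
  rw [disjoint_left]
  intro x hx hx'
  rw [mem_oddSet] at hx
  rw [mem_evenSet] at hx'
  omega

lemma oddSet_union_evenSet (n : ℕ) : oddSet n ∪ evenSet n = Icc 1 (2 * n) := by
  ext x
  rw [mem_union, mem_oddSet, mem_evenSet, mem_Icc]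
  omega

namespace IsPartitionOf

variable {G : Finset ℕ} {P : Finset (Finset ℕ)}

lemma subset_ground (hP : IsPartitionOf G P) {B : Finset ℕ} (hB : B ∈ P) : B ⊆ G :=
  hP.2.1 B hB

lemma eq_of_mem (hP : IsPartitionOf G P) {B₁ B₂ : Finset ℕ} (h₁ : B₁ ∈ P) (h₂ : B₂ ∈ P)
    {x : ℕ} (hx₁ : x ∈ B₁) (hx₂ : x ∈ B₂) : B₁ = B₂ := by
  obtain ⟨B, _, hu⟩ := hP.2.2 x (hP.subset_ground h₁ hx₁)
  rw [hu B₁ ⟨h₁, hx₁⟩, hu B₂ ⟨h₂, hx₂⟩]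

lemma exists_mem (hP : IsPartitionOf G P) {x : ℕ} (hx : x ∈ G) : ∃ B ∈ P, x ∈ B := by
  obtain ⟨B, ⟨hB, hxB⟩, _⟩ := hP.2.2 x hx
  exact ⟨B, hB, hxB⟩

lemma exists_mem_ne (hP : IsPartitionOf G P) {x : ℕ} (hx : x ∈ G)
    (hxP : ({x} : Finset ℕ) ∉ P) : ∃ B ∈ P, x ∈ B ∧ ∃ y ∈ B, y ≠ x := by
  obtain ⟨B, hB, hxB⟩ := hP.exists_mem hx
  refine ⟨B, hB, hxB, ?_⟩
  by_contra! h
  exact hxP ((eq_singleton_iff_unique_mem.mpr ⟨hxB, h⟩) ▸ hB)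

lemma singleton_notMem {B : Finset ℕ} (hP : IsPartitionOf G P) (hB : B ∈ P) {a b : ℕ}
    (ha : a ∈ B) (hb : b ∈ B) (hab : a ≠ b) : ({b} : Finset ℕ) ∉ P := fun h =>
  hab (mem_singleton.mp (hP.eq_of_mem hB h hb (mem_singleton_self b) ▸ ha))

lemma sum_card (hP : IsPartitionOf G P) : ∑ B ∈ P, B.card = G.card := by
  have hG : P.biUnion id = G := by
    ext x
    simp only [mem_biUnion, id]
    exact ⟨fun ⟨B, hB, hxB⟩ => hP.subset_ground hB hxB, hP.exists_mem⟩
  rw [← hG, card_biUnion]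
  · rfl
  · intro B₁ h₁ B₂ h₂ hne
    exact disjoint_left.mpr fun x hx₁ hx₂ => hne (hP.eq_of_mem h₁ h₂ hx₁ hx₂)

lemma union {H : Finset ℕ} {Q : Finset (Finset ℕ)} (hP : IsPartitionOf G P)
    (hQ : IsPartitionOf H Q) (hGH : Disjoint G H) : IsPartitionOf (G ∪ H) (P ∪ Q) := by
  refine ⟨?_, ?_, ?_⟩
  · intro B hB
    rcases mem_union.mp hB with h | h
    exacts [hP.1 B h, hQ.1 B h]
  · intro B hB
    rcases mem_union.mp hB with h | h
    · exact (hP.subset_ground h).trans subset_union_left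
    · exact (hQ.subset_ground h).trans subset_union_right
  · have key : ∀ {x B C}, x ∈ G → B ∈ P → x ∈ B → C ∈ Q → x ∉ C := fun hx _ _ hC hxC =>
      disjoint_left.mp hGH hx (hQ.subset_ground hC hxC)
    intro x hx
    rcases mem_union.mp hx with hx | hx
    · obtain ⟨B, hB, hxB⟩ := hP.exists_mem hx
      refine ⟨B, ⟨mem_union_left _ hB, hxB⟩, ?_⟩
      rintro C ⟨hC, hxC⟩
      rcases mem_union.mp hC with hC | hC
      exacts [hP.eq_of_mem hC hB hxC hxB, absurd hxC (key hx hB hxB hC)]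
    · obtain ⟨C, hC, hxC⟩ := hQ.exists_mem hx
      refine ⟨C, ⟨mem_union_right _ hC, hxC⟩, ?_⟩
      rintro D ⟨hD, hxD⟩
      rcases mem_union.mp hD with hD | hD
      · exact absurd hxC (key (hP.subset_ground hD hxD) hD hxD hC)
      · exact hQ.eq_of_mem hD hC hxD hxC

lemma card_union {H : Finset ℕ} {Q : Finset (Finset ℕ)} (hP : IsPartitionOf G P)
    (hQ : IsPartitionOf H Q) (hGH : Disjoint G H) : (P ∪ Q).card = P.card + Q.card := by
  refine card_union_of_disjoint (disjoint_left.mpr fun B hBP hBQ => ?_)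
  obtain ⟨x, hx⟩ := hP.1 B hBP
  exact disjoint_left.mp hGH (hP.subset_ground hBP hx) (hQ.subset_ground hBQ hx)

lemma ne_of_disjoint {H : Finset ℕ} {σ ρ : Finset (Finset ℕ)}
    (hσ : IsPartitionOf G σ) (hρ : IsPartitionOf H ρ) (hGH : Disjoint G H) {B C : Finset ℕ}
    (hB : B ∈ σ) (hC : C ∈ ρ) : B ≠ C := by
  rintro rfl
  obtain ⟨z, hz⟩ := hσ.1 B hB
  exact disjoint_left.mp hGH (hσ.subset_ground hB hz) (hρ.subset_ground hC hz)

end IsPartitionOf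

lemma exists_singleton_mem_of_card_add_card {G : Finset ℕ} {P Q : Finset (Finset ℕ)}
    (hP : IsPartitionOf G P) (hQ : IsPartitionOf G Q) (hcard : G.card < P.card + Q.card) :
    ∃ u, ({u} : Finset ℕ) ∈ P ∨ ({u} : Finset ℕ) ∈ Q := by
  by_contra! hc
  have key : ∀ R : Finset (Finset ℕ), IsPartitionOf G R → (∀ u, ({u} : Finset ℕ) ∉ R) →
      2 * R.card ≤ G.card := by
    intro R hR hsing
    calc 2 * R.card = ∑ _B ∈ R, 2 := by rw [sum_const, smul_eq_mul, mul_comm]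
      _ ≤ ∑ B ∈ R, B.card := sum_le_sum fun B hB => by
          rcases (hR.1 B hB).exists_eq_singleton_or_nontrivial with ⟨u, rfl⟩ | h
          exacts [absurd hB (hsing u), one_lt_card_iff_nontrivial.mpr h]
      _ = G.card := hR.sum_card
  have := key P hP (fun u => (hc u).1)
  have := key Q hQ (fun u => (hc u).2)
  omega

/-- The partition induced on `G.erase v` by a partition `P` of `G`. -/
def deletePoint (P : Finset (Finset ℕ)) (v : ℕ) : Finset (Finset ℕ) :=
  (P.image fun B => B.erase v).erase ∅

def mergeBlocks (P : Finset (Finset ℕ)) (C₁ C₂ : Finset ℕ) : Finset (Finset ℕ) :=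
  insert (C₁ ∪ C₂) ((P.erase C₁).erase C₂)

lemma mem_deletePoint {P : Finset (Finset ℕ)} {v : ℕ} {D : Finset ℕ} :
    D ∈ deletePoint P v ↔ D ≠ ∅ ∧ ∃ B ∈ P, B.erase v = D := by
  simp [deletePoint]

lemma mem_mergeBlocks {P : Finset (Finset ℕ)} {C₁ C₂ D : Finset ℕ} :
    D ∈ mergeBlocks P C₁ C₂ ↔ D = C₁ ∪ C₂ ∨ (D ∈ P ∧ D ≠ C₁ ∧ D ≠ C₂) := by
  simp only [mergeBlocks, mem_insert, mem_erase]
  tauto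

lemma mem_isolate {P : Finset (Finset ℕ)} {x : ℕ} {D : Finset ℕ} :
    D ∈ isolate P x ↔ D = {x} ∨ ∃ B ∈ P, B.erase x = D := by
  simp [isolate]

namespace IsPartitionOf

variable {G : Finset ℕ} {P : Finset (Finset ℕ)}

lemma deletePoint (hP : IsPartitionOf G P) (v : ℕ) :
    IsPartitionOf (G.erase v) (deletePoint P v) := by
  refine ⟨?_, ?_, ?_⟩
  · intro D hD
    exact nonempty_iff_ne_empty.mpr (mem_deletePoint.mp hD).1
  · intro D hD
    obtain ⟨-, B, hB, rfl⟩ := mem_deletePoint.mp hD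
    exact erase_subset_erase v (hP.subset_ground hB)
  · intro x hx
    obtain ⟨hxv, hxG⟩ := mem_erase.mp hx
    obtain ⟨B, hB, hxB⟩ := hP.exists_mem hxG
    have hxB' : x ∈ B.erase v := mem_erase.mpr ⟨hxv, hxB⟩
    refine ⟨B.erase v, ⟨mem_deletePoint.mpr ⟨ne_empty_of_mem hxB', B, hB, rfl⟩, hxB'⟩, ?_⟩
    rintro D ⟨hD, hxD⟩
    obtain ⟨-, B', hB', rfl⟩ := mem_deletePoint.mp hD
    rw [hP.eq_of_mem hB' hB (mem_of_mem_erase hxD) hxB]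

lemma erase_nonempty (hP : IsPartitionOf G P) {v : ℕ} (hv : ({v} : Finset ℕ) ∉ P)
    {B : Finset ℕ} (hB : B ∈ P) : (B.erase v).Nonempty := by
  by_cases hvB : v ∈ B
  · obtain ⟨B', hB', hvB', y, hy, hyv⟩ := hP.exists_mem_ne (hP.subset_ground hB hvB) hv
    rw [hP.eq_of_mem hB' hB hvB' hvB] at hy
    exact ⟨y, mem_erase.mpr ⟨hyv, hy⟩⟩
  · rw [erase_eq_of_notMem hvB]
    exact hP.1 B hB

end IsPartitionOf

section DeleteMerge

variable {G : Finset ℕ} {P : Finset (Finset ℕ)}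

lemma card_deletePoint_of_singleton_notMem (hP : IsPartitionOf G P) {v : ℕ}
    (hv : ({v} : Finset ℕ) ∉ P) : (deletePoint P v).card = P.card := by
  have hempty : ∅ ∉ P.image fun B => B.erase v := by
    simp only [mem_image, not_exists, not_and]
    exact fun B hB => (hP.erase_nonempty hv hB).ne_empty
  rw [deletePoint, erase_eq_of_notMem hempty]
  refine card_image_of_injOn fun B₁ hB₁ B₂ hB₂ h => ?_
  obtain ⟨y, hy⟩ := hP.erase_nonempty hv hB₁
  have hy₂ : y ∈ B₂.erase v := (h : B₁.erase v = B₂.erase v) ▸ hy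
  exact hP.eq_of_mem hB₁ hB₂ (mem_of_mem_erase hy) (mem_of_mem_erase hy₂)

lemma deletePoint_of_singleton_mem (hP : IsPartitionOf G P) {v : ℕ}
    (hv : ({v} : Finset ℕ) ∈ P) : deletePoint P v = P.erase {v} := by
  have hvB : ∀ B ∈ P, B ≠ {v} → v ∉ B := fun B hB hne hvB =>
    hne (hP.eq_of_mem hB hv hvB (mem_singleton_self v))
  ext D
  rw [mem_deletePoint, mem_erase]
  constructor
  · rintro ⟨hD, B, hB, rfl⟩
    have hBv : B ≠ {v} := by rintro rfl; exact hD (erase_singleton v)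
    rw [erase_eq_of_notMem (hvB B hB hBv)]
    exact ⟨hBv, hB⟩
  · rintro ⟨hDv, hD⟩
    exact ⟨(hP.1 D hD).ne_empty, D, hD, erase_eq_of_notMem (hvB D hD hDv)⟩

lemma isolate_eq_insert_deletePoint (hP : IsPartitionOf G P) {x : ℕ}
    (hx : ({x} : Finset ℕ) ∉ P) : isolate P x = insert {x} (deletePoint P x) := by
  rw [isolate, deletePoint, erase_eq_of_notMem]
  simp only [mem_image, not_exists, not_and]
  exact fun B hB => (hP.erase_nonempty hx hB).ne_empty

lemma card_isolate (hP : IsPartitionOf G P) {x : ℕ} (hx : ({x} : Finset ℕ) ∉ P) :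
    (isolate P x).card = P.card + 1 := by
  rw [isolate_eq_insert_deletePoint hP hx, card_insert_of_notMem,
    card_deletePoint_of_singleton_notMem hP hx]
  intro h
  obtain ⟨-, B, -, hB⟩ := mem_deletePoint.mp h
  exact notMem_erase x B (hB ▸ mem_singleton_self x)

lemma IsPartitionOf.isolate (hP : IsPartitionOf G P) {x : ℕ} (hxG : x ∈ G)
    (hx : ({x} : Finset ℕ) ∉ P) : IsPartitionOf G (isolate P x) := by
  have hsingle : IsPartitionOf {x} {{x}} := by
    refine ⟨by simp, by simp, fun y hy => ⟨{x}, by simp_all, by simp⟩⟩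
  rw [isolate_eq_insert_deletePoint hP hx, ← insert_erase hxG, insert_eq, insert_eq]
  exact hsingle.union (hP.deletePoint x) (disjoint_singleton_left.mpr (notMem_erase x G))

lemma IsPartitionOf.mergeBlocks (hP : IsPartitionOf G P) {C₁ C₂ : Finset ℕ} (h₁ : C₁ ∈ P)
    (h₂ : C₂ ∈ P) : IsPartitionOf G (mergeBlocks P C₁ C₂) := by
  refine ⟨?_, ?_, ?_⟩
  · intro D hD
    rcases mem_mergeBlocks.mp hD with rfl | ⟨hD, -⟩
    exacts [(hP.1 C₁ h₁).mono subset_union_left, hP.1 D hD]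
  · intro D hD
    rcases mem_mergeBlocks.mp hD with rfl | ⟨hD, -⟩
    exacts [union_subset (hP.subset_ground h₁) (hP.subset_ground h₂), hP.subset_ground hD]
  · intro x hx
    obtain ⟨B, hB, hxB⟩ := hP.exists_mem hx
    by_cases hBC : B = C₁ ∨ B = C₂
    · refine ⟨C₁ ∪ C₂, ⟨mem_mergeBlocks.mpr (Or.inl rfl), ?_⟩, ?_⟩
      · rcases hBC with rfl | rfl
        exacts [mem_union_left _ hxB, mem_union_right _ hxB]
      · rintro D ⟨hD, hxD⟩
        rcases mem_mergeBlocks.mp hD with rfl | ⟨hDP, hD₁, hD₂⟩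
        · rfl
        · have := hP.eq_of_mem hDP hB hxD hxB
          rcases hBC with rfl | rfl
          exacts [absurd this hD₁, absurd this hD₂]
    · rw [not_or] at hBC
      refine ⟨B, ⟨mem_mergeBlocks.mpr (Or.inr ⟨hB, hBC⟩), hxB⟩, ?_⟩
      rintro D ⟨hD, hxD⟩
      rcases mem_mergeBlocks.mp hD with rfl | ⟨hD, -⟩
      · rcases mem_union.mp hxD with h | h
        exacts [absurd (hP.eq_of_mem hB h₁ hxB h) hBC.1, absurd (hP.eq_of_mem hB h₂ hxB h) hBC.2]
      · exact hP.eq_of_mem hD hB hxD hxB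

lemma card_mergeBlocks (hP : IsPartitionOf G P) {C₁ C₂ : Finset ℕ} (h₁ : C₁ ∈ P)
    (h₂ : C₂ ∈ P) (hne : C₁ ≠ C₂) : (mergeBlocks P C₁ C₂).card + 1 = P.card := by
  have hnotin : C₁ ∪ C₂ ∉ (P.erase C₁).erase C₂ := by
    intro hD
    obtain ⟨z, hz⟩ := hP.1 C₁ h₁
    exact ne_of_mem_erase (mem_of_mem_erase hD)
      (hP.eq_of_mem (mem_of_mem_erase (mem_of_mem_erase hD)) h₁ (mem_union_left _ hz) hz)
  have h2 : 1 < P.card := one_lt_card.mpr ⟨C₁, h₁, C₂, h₂, hne⟩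
  rw [mergeBlocks, card_insert_of_notMem hnotin,
    card_erase_of_mem (mem_erase.mpr ⟨hne.symm, h₂⟩), card_erase_of_mem h₁]
  omega

end DeleteMerge

namespace NonCrossing

variable {P : Finset (Finset ℕ)}

lemma mono {Q : Finset (Finset ℕ)} (hQP : Q ⊆ P) (hP : NonCrossing P) : NonCrossing Q :=
  fun a b c d hab hbc hcd B₁ h₁ B₂ h₂ => hP a b c d hab hbc hcd B₁ (hQP h₁) B₂ (hQP h₂)

lemma image_erase (hP : NonCrossing P) (v : ℕ) :
    NonCrossing (P.image fun B => B.erase v) := by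
  intro a b c d hab hbc hcd B₁ h₁ B₂ h₂ ha hc hb hd
  obtain ⟨D₁, hD₁, rfl⟩ := mem_image.mp h₁
  obtain ⟨D₂, hD₂, rfl⟩ := mem_image.mp h₂
  rw [hP a b c d hab hbc hcd D₁ hD₁ D₂ hD₂ (mem_of_mem_erase ha) (mem_of_mem_erase hc)
    (mem_of_mem_erase hb) (mem_of_mem_erase hd)]

lemma deletePoint (hP : NonCrossing P) (v : ℕ) : NonCrossing (deletePoint P v) :=
  (hP.image_erase v).mono (erase_subset _ _)

lemma union_deletePoint {A : Finset (Finset ℕ)} (hNC : NonCrossing (A ∪ P)) {v : ℕ}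
    (hA : ∀ D ∈ A, v ∉ D) : NonCrossing (A ∪ _root_.deletePoint P v) := by
  refine (hNC.image_erase v).mono fun D hD => ?_
  rcases mem_union.mp hD with hD | hD
  · exact mem_image.mpr ⟨D, mem_union_left _ hD, erase_eq_of_notMem (hA D hD)⟩
  · obtain ⟨-, B, hB, rfl⟩ := mem_deletePoint.mp hD
    exact mem_image_of_mem _ (mem_union_right _ hB)

lemma insert_singleton (hP : NonCrossing P) (x : ℕ) : NonCrossing (insert {x} P) := by
  intro a b c d hab hbc hcd B₁ h₁ B₂ h₂ ha hc hb hd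
  rcases mem_insert.mp h₁ with rfl | h₁
  · rw [mem_singleton] at ha hc; omega
  rcases mem_insert.mp h₂ with rfl | h₂
  · rw [mem_singleton] at hb hd; omega
  exact hP a b c d hab hbc hcd B₁ h₁ B₂ h₂ ha hc hb hd

lemma image_of_strictMonoOn {f : ℕ → ℕ} {S : Set ℕ} (hf : StrictMonoOn f S)
    (hPS : ∀ B ∈ P, ↑B ⊆ S) (hP : NonCrossing P) :
    NonCrossing (P.image (Finset.image f)) := by
  intro a' b' c' d' hab hbc hcd B₁' hB₁' B₂' hB₂' ha hc hb hd
  obtain ⟨B₁, hB₁, rfl⟩ := mem_image.mp hB₁'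
  obtain ⟨B₂, hB₂, rfl⟩ := mem_image.mp hB₂'
  obtain ⟨a, haB, rfl⟩ := mem_image.mp ha
  obtain ⟨c, hcB, rfl⟩ := mem_image.mp hc
  obtain ⟨b, hbB, rfl⟩ := mem_image.mp hb
  obtain ⟨d, hdB, rfl⟩ := mem_image.mp hd
  have hS₁ := hPS B₁ hB₁
  have hS₂ := hPS B₂ hB₂
  rw [hP a b c d ((hf.lt_iff_lt (hS₁ haB) (hS₂ hbB)).mp hab)
    ((hf.lt_iff_lt (hS₂ hbB) (hS₁ hcB)).mp hbc) ((hf.lt_iff_lt (hS₁ hcB) (hS₂ hdB)).mp hcd)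
    B₁ hB₁ B₂ hB₂ haB hcB hbB hdB]

lemma image_of_strictAntiOn {f : ℕ → ℕ} {S : Set ℕ} (hf : StrictAntiOn f S)
    (hPS : ∀ B ∈ P, ↑B ⊆ S) (hP : NonCrossing P) :
    NonCrossing (P.image (Finset.image f)) := by
  intro a' b' c' d' hab hbc hcd B₁' hB₁' B₂' hB₂' ha hc hb hd
  obtain ⟨B₁, hB₁, rfl⟩ := mem_image.mp hB₁'
  obtain ⟨B₂, hB₂, rfl⟩ := mem_image.mp hB₂'
  obtain ⟨a, haB, rfl⟩ := mem_image.mp ha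
  obtain ⟨c, hcB, rfl⟩ := mem_image.mp hc
  obtain ⟨b, hbB, rfl⟩ := mem_image.mp hb
  obtain ⟨d, hdB, rfl⟩ := mem_image.mp hd
  have hS₁ := hPS B₁ hB₁
  have hS₂ := hPS B₂ hB₂
  rw [hP d c b a ((hf.lt_iff_gt (hS₁ hcB) (hS₂ hdB)).mp hcd)
    ((hf.lt_iff_gt (hS₂ hbB) (hS₁ hcB)).mp hbc) ((hf.lt_iff_gt (hS₁ haB) (hS₂ hbB)).mp hab)
    B₂ hB₂ B₁ hB₁ hdB hbB hcB haB]

end NonCrossing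

namespace NonCrossing

variable {G : Finset ℕ} {P : Finset (Finset ℕ)} {Cl Cr : Finset ℕ}

lemma mergeBlocks_of_forall (hNC : NonCrossing P)
    (hsep : ∀ D ∈ P, D ≠ Cl → D ≠ Cr → ∀ a b c d, a < b → b < c → c < d →
      ¬ (a ∈ Cl ∪ Cr ∧ c ∈ Cl ∪ Cr ∧ b ∈ D ∧ d ∈ D) ∧
      ¬ (a ∈ D ∧ c ∈ D ∧ b ∈ Cl ∪ Cr ∧ d ∈ Cl ∪ Cr)) :
    NonCrossing (mergeBlocks P Cl Cr) := by
  intro a b c d hab hbc hcd B₁ h₁ B₂ h₂ ha hc hb hd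
  rcases mem_mergeBlocks.mp h₁ with rfl | ⟨h₁, h₁l, h₁r⟩ <;>
    rcases mem_mergeBlocks.mp h₂ with h₂ | ⟨h₂, h₂l, h₂r⟩
  · exact h₂.symm
  · exact absurd ⟨ha, hc, hb, hd⟩ (hsep B₂ h₂ h₂l h₂r a b c d hab hbc hcd).1
  · exact absurd ⟨ha, hc, h₂ ▸ hb, h₂ ▸ hd⟩ (hsep B₁ h₁ h₁l h₁r a b c d hab hbc hcd).2
  · exact hNC a b c d hab hbc hcd B₁ h₁ B₂ h₂ ha hc hb hd

/-- `hadj` says that `r` comes right after `l` in the cyclic order of the ground set. -/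
lemma mergeBlocks_of_adjacent (hP : IsPartitionOf G P) (hNC : NonCrossing P) (hCl : Cl ∈ P)
    (hCr : Cr ∈ P) {l r : ℕ} (hl : l ∈ Cl) (hr : r ∈ Cr)
    (hadj : (l < r ∧ ∀ z ∈ G, z ≤ l ∨ r ≤ z) ∨ (r < l ∧ ∀ z ∈ G, r ≤ z ∧ z ≤ l)) :
    NonCrossing (mergeBlocks P Cl Cr) := by
  refine hNC.mergeBlocks_of_forall fun D hD hDl hDr a b c d hab hbc hcd => ?_
  have hX : ∀ {X}, X ∈ P → X ≠ D → ∀ {p q s t}, p < q → q < s → s < t →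
      p ∈ X → s ∈ X → q ∈ D → t ∈ D → False := fun {X} hX hne {p q s t} hpq hqs hst hp hs hq ht =>
    hne (hNC _ _ _ _ hpq hqs hst _ hX _ hD hp hs hq ht)
  have hY : ∀ {X}, X ∈ P → X ≠ D → ∀ {p q s t}, p < q → q < s → s < t →
      p ∈ D → s ∈ D → q ∈ X → t ∈ X → False := fun {X} hX hne {p q s t} hpq hqs hst hp hs hq ht =>
    hne (hNC _ _ _ _ hpq hqs hst _ hD _ hX hp hs hq ht).symm
  have hzl : ∀ {z}, z ∈ D → z ≠ l := fun hz h => hDl (hP.eq_of_mem hD hCl hz (h ▸ hl))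
  have hzr : ∀ {z}, z ∈ D → z ≠ r := fun hz h => hDr (hP.eq_of_mem hD hCr hz (h ▸ hr))
  have hzG : ∀ {z}, z ∈ D → z ∈ G := fun hz => hP.subset_ground hD hz
  refine ⟨fun ⟨ha, hc, hb, hd⟩ => ?_, fun ⟨ha, hc, hb, hd⟩ => ?_⟩
  · have hb' := hzl hb; have hb'' := hzr hb; have hd' := hzl hd; have hd'' := hzr hd
    rcases mem_union.mp ha with ha | ha <;> rcases mem_union.mp hc with hc | hc
    · exact hX hCl hDl.symm hab hbc hcd ha hc hb hd
    · rcases hadj with ⟨hlr, hgap⟩ | ⟨hrl, hgap⟩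
      · rcases hgap b (hzG hb) with hbl | hbr
        · rcases hgap d (hzG hd) with hdl | hdr
          · exact hY hCr hDr.symm hbc hcd (by omega) hb hd hc hr
          · exact hX hCl hDl.symm hab (by omega) (by omega) ha hl hb hd
        · exact hX hCr hDr.symm (by omega) hbc hcd hr hc hb hd
      · have := hgap b (hzG hb)
        exact hX hCr hDr.symm (by omega) hbc hcd hr hc hb hd
    · rcases hadj with ⟨hlr, hgap⟩ | ⟨hrl, hgap⟩
      · rcases hgap b (hzG hb) with hbl | hbr
        · rcases hgap d (hzG hd) with hdl | hdr
          · exact hY hCl hDl.symm hbc hcd (by omega) hb hd hc hl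
          · exact hX hCr hDr.symm hab (by omega) (by omega) ha hr hb hd
        · exact hX hCl hDl.symm (by omega) hbc hcd hl hc hb hd
      · have := hgap d (hzG hd)
        exact hY hCl hDl.symm hbc hcd (by omega) hb hd hc hl
    · exact hX hCr hDr.symm hab hbc hcd ha hc hb hd
  · have ha' := hzl ha; have ha'' := hzr ha; have hc' := hzl hc; have hc'' := hzr hc
    rcases mem_union.mp hb with hb | hb <;> rcases mem_union.mp hd with hd | hd
    · exact hY hCl hDl.symm hab hbc hcd ha hc hb hd
    · rcases hadj with ⟨hlr, hgap⟩ | ⟨hrl, hgap⟩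
      · rcases hgap c (hzG hc) with hcl | hcr
        · exact hY hCl hDl.symm hab hbc (by omega) ha hc hb hl
        · rcases hgap a (hzG ha) with hal | har
          · exact hY hCr hDr.symm (by omega) (by omega) hcd ha hc hr hd
          · exact hX hCl hDl.symm (by omega) hab hbc hl hb ha hc
      · have := hgap c (hzG hc)
        exact hY hCl hDl.symm hab hbc (by omega) ha hc hb hl
    · rcases hadj with ⟨hlr, hgap⟩ | ⟨hrl, hgap⟩
      · rcases hgap c (hzG hc) with hcl | hcr
        · exact hY hCr hDr.symm hab hbc (by omega) ha hc hb hr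
        · rcases hgap a (hzG ha) with hal | har
          · exact hY hCl hDl.symm (by omega) (by omega) hcd ha hc hl hd
          · exact hX hCr hDr.symm (by omega) hab hbc hr hb ha hc
      · have := hgap a (hzG ha)
        exact hX hCr hDr.symm (by omega) hab hbc hr hb ha hc
    · exact hY hCr hDr.symm hab hbc hcd ha hc hb hd

end NonCrossing

def Linked (P Q : Finset (Finset ℕ)) (a b : ℕ) : Prop :=
  ∃ B, (B ∈ P ∨ B ∈ Q) ∧ a ∈ B ∧ b ∈ B

def JoinConnectedOn (G : Finset ℕ) (P Q : Finset (Finset ℕ)) : Prop :=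
  ∀ x ∈ G, ∀ y ∈ G, ReflTransGen (Linked P Q) x y

section Connectivity

variable {G : Finset ℕ} {P Q : Finset (Finset ℕ)}

lemma Linked.symm {a b : ℕ} (h : Linked P Q a b) : Linked P Q b a :=
  let ⟨B, hB, ha, hb⟩ := h; ⟨B, hB, hb, ha⟩

lemma Linked.swap {a b : ℕ} (h : Linked P Q a b) : Linked Q P a b :=
  let ⟨B, hB, ha, hb⟩ := h; ⟨B, hB.symm, ha, hb⟩

lemma joinConnectedOn_comm : JoinConnectedOn G P Q ↔ JoinConnectedOn G Q P :=
  ⟨fun h x hx y hy => ReflTransGen.mono (fun _ _ => Linked.swap) _ _ (h x hx y hy),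
    fun h x hx y hy => ReflTransGen.mono (fun _ _ => Linked.swap) _ _ (h x hx y hy)⟩

lemma eq_of_reflTransGen_linked (hP : IsPartitionOf G P) (hQ : IsPartitionOf G Q) {x z : ℕ}
    (hxP : ({x} : Finset ℕ) ∈ P) (hxQ : ({x} : Finset ℕ) ∈ Q)
    (h : ReflTransGen (Linked P Q) x z) : z = x := by
  induction h with
  | refl => rfl
  | tail _ hstep ih =>
    obtain ⟨B, hB, hb, hc⟩ := hstep
    rw [ih] at hb
    have hBx : B = {x} := by
      rcases hB with hB | hB
      exacts [hP.eq_of_mem hB hxP hb (mem_singleton_self x),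
        hQ.eq_of_mem hB hxQ hb (mem_singleton_self x)]
    rwa [hBx, mem_singleton] at hc

lemma not_joinConnectedOn_of_singleton_mem (hP : IsPartitionOf G P) (hQ : IsPartitionOf G Q)
    {x y : ℕ} (hxP : ({x} : Finset ℕ) ∈ P) (hxQ : ({x} : Finset ℕ) ∈ Q) (hy : y ∈ G)
    (hyx : y ≠ x) : ¬ JoinConnectedOn G P Q := fun h =>
  hyx (eq_of_reflTransGen_linked hP hQ hxP hxQ
    (h x (hP.subset_ground hxP (mem_singleton_self x)) y hy))

lemma linked_deletePoint {x a b : ℕ} {D : Finset ℕ} (hD : D ∈ P ∨ D ∈ Q) (ha : a ∈ D)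
    (hb : b ∈ D) (hax : a ≠ x) (hbx : b ≠ x) :
    Linked (deletePoint P x) (deletePoint Q x) a b := by
  have ha' : a ∈ D.erase x := mem_erase.mpr ⟨hax, ha⟩
  refine ⟨D.erase x, ?_, ha', mem_erase.mpr ⟨hbx, hb⟩⟩
  exact hD.imp (fun hD => mem_deletePoint.mpr ⟨ne_empty_of_mem ha', D, hD, rfl⟩)
    (fun hD => mem_deletePoint.mpr ⟨ne_empty_of_mem ha', D, hD, rfl⟩)

lemma Linked.of_deletePoint {x a b : ℕ}
    (h : Linked (deletePoint P x) (deletePoint Q x) a b) : Linked P Q a b := by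
  obtain ⟨D, hD, ha, hb⟩ := h
  rcases hD with hD | hD <;> obtain ⟨-, B, hB, rfl⟩ := mem_deletePoint.mp hD
  exacts [⟨B, Or.inl hB, mem_of_mem_erase ha, mem_of_mem_erase hb⟩,
    ⟨B, Or.inr hB, mem_of_mem_erase ha, mem_of_mem_erase hb⟩]

/-- Paths through `x` are rerouted through `b₀`. -/
lemma joinConnectedOn_deletePoint {x b₀ : ℕ} {B : Finset ℕ} (hB : B ∈ P ∨ B ∈ Q)
    (hb₀ : b₀ ∈ B) (hb₀x : b₀ ≠ x)
    (hblocks : ∀ D, D ∈ P ∨ D ∈ Q → x ∈ D → D = {x} ∨ D = B)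
    (h : JoinConnectedOn G P Q) :
    JoinConnectedOn (G.erase x) (deletePoint P x) (deletePoint Q x) := by
  set f : ℕ → ℕ := fun w => if w = x then b₀ else w
  have hthrough : ∀ {D c}, D ∈ P ∨ D ∈ Q → x ∈ D → c ∈ D → c ≠ x → c ∈ B := by
    intro D c hD hxD hcD hcx
    rcases hblocks D hD hxD with rfl | rfl
    exacts [absurd (mem_singleton.mp hcD) hcx, hcD]
  have key : ∀ a b, Linked P Q a b →
      ReflTransGen (Linked (deletePoint P x) (deletePoint Q x)) (f a) (f b) := by
    rintro a b ⟨D, hD, ha, hb⟩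
    simp only [f]
    by_cases hax : a = x <;> by_cases hbx : b = x <;> simp only [hax, hbx, if_true, if_false]
    · exact ReflTransGen.refl
    · exact .single (linked_deletePoint hB hb₀ (hthrough hD (hax ▸ ha) hb hbx) hb₀x hbx)
    · exact .single (linked_deletePoint hB (hthrough hD (hbx ▸ hb) ha hax) hb₀ hax hb₀x)
    · exact .single (linked_deletePoint hD ha hb hax hbx)
  intro u hu v hv
  have hux := ne_of_mem_erase hu
  have hvx := ne_of_mem_erase hv
  simpa [f, Function.onFun, hux, hvx] using
    ReflTransGen.lift' f key _ _ (h u (mem_of_mem_erase hu) v (mem_of_mem_erase hv))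

lemma joinConnectedOn_of_deletePoint {x y : ℕ} (hy : y ∈ G) (hyx : y ≠ x)
    (hxy : Linked P Q x y) (h : JoinConnectedOn (G.erase x) (deletePoint P x) (deletePoint Q x)) :
    JoinConnectedOn G P Q := by
  have reach : ∀ u ∈ G, ReflTransGen (Linked P Q) u y ∧ ReflTransGen (Linked P Q) y u := by
    intro u hu
    by_cases hux : u = x
    · subst hux
      exact ⟨.single hxy, .single hxy.symm⟩
    · have hu' := mem_erase.mpr ⟨hux, hu⟩
      have hy' := mem_erase.mpr ⟨hyx, hy⟩
      exact ⟨ReflTransGen.mono (fun _ _ => Linked.of_deletePoint) _ _ (h u hu' y hy'),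
        ReflTransGen.mono (fun _ _ => Linked.of_deletePoint) _ _ (h y hy' u hu')⟩
  exact fun u hu v hv => (reach u hu).1.trans (reach v hv).2

lemma deletePoint_isolate (P : Finset (Finset ℕ)) (x : ℕ) :
    deletePoint (isolate P x) x = deletePoint P x := by
  ext D
  simp only [mem_deletePoint, mem_isolate]
  constructor
  · rintro ⟨hD, B, hB | ⟨B', hB', rfl⟩, rfl⟩
    · exact absurd (by rw [hB, erase_singleton]) hD
    · exact ⟨hD, B', hB', erase_idem.symm⟩
  · rintro ⟨hD, B, hB, rfl⟩
    exact ⟨hD, B.erase x, Or.inr ⟨B, hB, rfl⟩, erase_idem⟩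

lemma joinConnectedOn_isolate_iff (hQ : IsPartitionOf G Q) {x : ℕ} (hx : x ∈ G)
    (hxQ : ({x} : Finset ℕ) ∉ Q) :
    JoinConnectedOn G (isolate P x) Q ↔
      JoinConnectedOn (G.erase x) (deletePoint P x) (deletePoint Q x) := by
  obtain ⟨B, hB, hxB, b₀, hb₀, hb₀x⟩ := hQ.exists_mem_ne hx hxQ
  rw [← deletePoint_isolate P x]
  refine ⟨joinConnectedOn_deletePoint (Or.inr hB) hb₀ hb₀x ?_,
    joinConnectedOn_of_deletePoint (hQ.subset_ground hB hb₀) hb₀x ⟨B, Or.inr hB, hxB, hb₀⟩⟩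
  rintro D (hD | hD) hxD
  · rcases mem_isolate.mp hD with hD | ⟨B', -, rfl⟩
    exacts [Or.inl hD, absurd hxD (notMem_erase x B')]
  · exact Or.inr (hQ.eq_of_mem hD hB hxD hxB)

lemma joinConnectedOn_isolate_comm (hP : IsPartitionOf G P) (hQ : IsPartitionOf G Q) {x : ℕ}
    (hx : x ∈ G) (hxP : ({x} : Finset ℕ) ∉ P) (hxQ : ({x} : Finset ℕ) ∉ Q) :
    JoinConnectedOn G (isolate P x) Q ↔ JoinConnectedOn G P (isolate Q x) := by
  rw [joinConnectedOn_isolate_iff hQ hx hxQ, joinConnectedOn_comm (P := P),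
    joinConnectedOn_isolate_iff hP hx hxP, joinConnectedOn_comm]

lemma joinConnectedOn_of_mergeBlocks {Cl Cr : Finset ℕ} {l r : ℕ} (hCl : Cl ∈ P) (hCr : Cr ∈ P)
    (hl : l ∈ Cl) (hr : r ∈ Cr) (hlr : Linked P Q l r)
    (h : JoinConnectedOn G (mergeBlocks P Cl Cr) Q) : JoinConnectedOn G P Q := by
  have key : ∀ a b, Linked (mergeBlocks P Cl Cr) Q a b → ReflTransGen (Linked P Q) a b := by
    rintro a b ⟨D, hD | hD, ha, hb⟩
    · rcases mem_mergeBlocks.mp hD with rfl | ⟨hD, -⟩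
      · rcases mem_union.mp ha with ha | ha <;> rcases mem_union.mp hb with hb | hb
        · exact .single ⟨Cl, Or.inl hCl, ha, hb⟩
        · exact .head ⟨Cl, Or.inl hCl, ha, hl⟩ (.head hlr (.single ⟨Cr, Or.inl hCr, hr, hb⟩))
        · exact .head ⟨Cr, Or.inl hCr, ha, hr⟩ (.head hlr.symm (.single ⟨Cl, Or.inl hCl, hl, hb⟩))
        · exact .single ⟨Cr, Or.inl hCr, ha, hb⟩
      · exact .single ⟨D, Or.inl hD, ha, hb⟩
    · exact .single ⟨D, Or.inr hD, ha, hb⟩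
  exact fun u hu v hv => by simpa [Function.onFun] using ReflTransGen.lift' id key _ _ (h u hu v hv)

end Connectivity

section Relabel

variable {G : Finset ℕ} {P Q : Finset (Finset ℕ)} {f : ℕ → ℕ}

lemma IsPartitionOf.image (hf : Set.InjOn f G) (hP : IsPartitionOf G P) :
    IsPartitionOf (G.image f) (P.image (Finset.image f)) := by
  refine ⟨?_, ?_, ?_⟩
  · intro B hB
    obtain ⟨B', hB', rfl⟩ := mem_image.mp hB
    exact (hP.1 B' hB').image f
  · intro B hB
    obtain ⟨B', hB', rfl⟩ := mem_image.mp hB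
    exact image_subset_image (hP.subset_ground hB')
  · intro y hy
    obtain ⟨x, hx, rfl⟩ := mem_image.mp hy
    obtain ⟨B, hB, hxB⟩ := hP.exists_mem hx
    refine ⟨B.image f, ⟨mem_image_of_mem _ hB, mem_image_of_mem f hxB⟩, ?_⟩
    rintro C ⟨hC, hfxC⟩
    obtain ⟨C', hC', rfl⟩ := mem_image.mp hC
    obtain ⟨z, hz, hfz⟩ := mem_image.mp hfxC
    rw [hP.eq_of_mem hC' hB (hf (hP.subset_ground hC' hz) hx hfz ▸ hz) hxB]

lemma IsPartitionOf.card_image (hf : Set.InjOn f G) (hP : IsPartitionOf G P) :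
    (P.image (Finset.image f)).card = P.card := by
  refine card_image_of_injOn fun B₁ h₁ B₂ h₂ h => ?_
  obtain ⟨x, hx⟩ := hP.1 B₁ h₁
  obtain ⟨y, hy, hfy⟩ := mem_image.mp ((h : B₁.image f = B₂.image f) ▸ mem_image_of_mem f hx)
  have hyx := hf (hP.subset_ground h₂ hy) (hP.subset_ground h₁ hx) hfy
  exact hP.eq_of_mem h₁ h₂ hx (hyx ▸ hy)

lemma JoinConnectedOn.image (f : ℕ → ℕ) (h : JoinConnectedOn G P Q) :
    JoinConnectedOn (G.image f) (P.image (Finset.image f)) (Q.image (Finset.image f)) := by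
  intro x' hx' y' hy'
  obtain ⟨x, hx, rfl⟩ := mem_image.mp hx'
  obtain ⟨y, hy, rfl⟩ := mem_image.mp hy'
  refine ReflTransGen.lift f (fun a b ⟨B, hB, ha, hb⟩ => ?_) _ _ (h x hx y hy)
  exact ⟨B.image f, hB.imp (mem_image_of_mem _) (mem_image_of_mem _),
    mem_image_of_mem f ha, mem_image_of_mem f hb⟩

lemma joinConnectedOn_image_iff (hf : Set.InjOn f G) (hP : IsPartitionOf G P)
    (hQ : IsPartitionOf G Q) :
    JoinConnectedOn (G.image f) (P.image (Finset.image f)) (Q.image (Finset.image f)) ↔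
      JoinConnectedOn G P Q := by
  refine ⟨fun h u hu v hv => ?_, JoinConnectedOn.image f⟩
  set g := Function.invFunOn f G
  have hgf : ∀ x ∈ G, g (f x) = x := fun x hx => hf.leftInvOn_invFunOn hx
  have key : ∀ a b, Linked (P.image (Finset.image f)) (Q.image (Finset.image f)) a b →
      Linked P Q (g a) (g b) := by
    rintro a b ⟨B', hB', ha, hb⟩
    obtain ⟨B, hB, rfl⟩ : ∃ B, (B ∈ P ∨ B ∈ Q) ∧ B.image f = B' := by
      rcases hB' with hB' | hB' <;> obtain ⟨B, hB, rfl⟩ := mem_image.mp hB'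
      exacts [⟨B, Or.inl hB, rfl⟩, ⟨B, Or.inr hB, rfl⟩]
    have hBG : B ⊆ G := hB.elim hP.subset_ground hQ.subset_ground
    obtain ⟨a₁, ha₁, rfl⟩ := mem_image.mp ha
    obtain ⟨b₁, hb₁, rfl⟩ := mem_image.mp hb
    rw [hgf a₁ (hBG ha₁), hgf b₁ (hBG hb₁)]
    exact ⟨B, hB, ha₁, hb₁⟩
  have := ReflTransGen.lift g key _ _
    (h (f u) (mem_image_of_mem f hu) (f v) (mem_image_of_mem f hv))
  simpa [Function.onFun, hgf u hu, hgf v hv] using this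

end Relabel

/-- Renumbers `ℕ \ {p, p + 1}` increasingly onto `ℕ`. -/
def closeGap (p y : ℕ) : ℕ := if y < p then y else y - 2

lemma strictMonoOn_closeGap (p : ℕ) : StrictMonoOn (closeGap p) {y | y ≠ p ∧ y ≠ p + 1} := by
  intro a ⟨ha, ha'⟩ b ⟨hb, hb'⟩ hab
  unfold closeGap
  split_ifs <;> omega

lemma coe_sdiff_pair_subset (G : Finset ℕ) (p : ℕ) :
    ↑(G \ {p, p + 1}) ⊆ {y : ℕ | y ≠ p ∧ y ≠ p + 1} := by
  intro z hz
  have hz' := (mem_sdiff.mp (mem_coe.mp hz)).2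
  exact ⟨fun h => hz' (h ▸ mem_insert_self _ _), fun h => hz' (h ▸ by simp)⟩

lemma image_closeGap_oddSet {n p : ℕ} (hp : 1 ≤ p) (hpn : p + 1 ≤ 2 * n) :
    (oddSet n \ {p, p + 1}).image (closeGap p) = oddSet (n - 1) := by
  ext y
  simp only [mem_image, mem_sdiff, mem_oddSet, mem_insert, mem_singleton, closeGap]
  constructor
  · rintro ⟨z, ⟨hz, hzp⟩, rfl⟩
    split_ifs <;> omega
  · intro hy
    refine ⟨if y < p then y else y + 2, ?_, ?_⟩ <;> split_ifs <;> omega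

lemma image_closeGap_evenSet {n p : ℕ} (hp : 1 ≤ p) (hpn : p + 1 ≤ 2 * n) :
    (evenSet n \ {p, p + 1}).image (closeGap p) = evenSet (n - 1) := by
  ext y
  simp only [mem_image, mem_sdiff, mem_evenSet, mem_insert, mem_singleton, closeGap]
  constructor
  · rintro ⟨z, ⟨hz, hzp⟩, rfl⟩
    split_ifs <;> omega
  · intro hy
    refine ⟨if y < p then y else y + 2, ?_, ?_⟩ <;> split_ifs <;> omega

lemma image_closeGap_Icc {n p : ℕ} (hp : 1 ≤ p) (hpn : p + 1 ≤ 2 * n) :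
    (Icc 1 (2 * n) \ {p, p + 1}).image (closeGap p) = Icc 1 (2 * (n - 1)) := by
  rw [← oddSet_union_evenSet, ← oddSet_union_evenSet, union_sdiff_distrib, image_union,
    image_closeGap_oddSet hp hpn, image_closeGap_evenSet hp hpn]

def collapse (p : ℕ) (P : Finset (Finset ℕ)) : Finset (Finset ℕ) :=
  P.image (Finset.image (closeGap p))

section Collapse

variable {n x : ℕ}

lemma oddSet_erase_eq_sdiff (hx : x ∈ oddSet n) : (oddSet n).erase x = oddSet n \ {x, x + 1} := by
  have := mem_oddSet.mp hx
  ext z; simp only [mem_erase, mem_sdiff, mem_insert, mem_singleton, mem_oddSet]; omega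

lemma evenSet_erase_eq_sdiff (hx : x ∈ oddSet n) :
    (evenSet n).erase (x + 1) = evenSet n \ {x, x + 1} := by
  have := mem_oddSet.mp hx
  ext z; simp only [mem_erase, mem_sdiff, mem_insert, mem_singleton, mem_evenSet]; omega

lemma image_closeGap_oddSet_erase (hx : x ∈ oddSet n) :
    ((oddSet n).erase x).image (closeGap x) = oddSet (n - 1) := by
  have := mem_oddSet.mp hx
  rw [oddSet_erase_eq_sdiff hx, image_closeGap_oddSet (by omega) (by omega)]

lemma image_closeGap_evenSet_erase (hx : x ∈ oddSet n) :
    ((evenSet n).erase (x + 1)).image (closeGap x) = evenSet (n - 1) := by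
  have := mem_oddSet.mp hx
  rw [evenSet_erase_eq_sdiff hx, image_closeGap_evenSet (by omega) (by omega)]

lemma strictMonoOn_closeGap_erase (hx : x ∈ oddSet n) :
    StrictMonoOn (closeGap x) ↑((oddSet n).erase x ∪ (evenSet n).erase (x + 1)) := by
  refine (strictMonoOn_closeGap x).mono ?_
  rw [oddSet_erase_eq_sdiff hx, evenSet_erase_eq_sdiff hx, ← union_sdiff_distrib]
  exact coe_sdiff_pair_subset _ x

lemma injOn_closeGap_oddSet_erase (hx : x ∈ oddSet n) :
    Set.InjOn (closeGap x) ↑((oddSet n).erase x) :=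
  ((strictMonoOn_closeGap_erase hx).mono (coe_subset.mpr subset_union_left)).injOn

lemma injOn_closeGap_evenSet_erase (hx : x ∈ oddSet n) :
    Set.InjOn (closeGap x) ↑((evenSet n).erase (x + 1)) :=
  ((strictMonoOn_closeGap_erase hx).mono (coe_subset.mpr subset_union_right)).injOn

lemma isNCPair_collapse (hx : x ∈ oddSet n) {P Pd : Finset (Finset ℕ)}
    (hP : IsPartitionOf ((oddSet n).erase x) P)
    (hPd : IsPartitionOf ((evenSet n).erase (x + 1)) Pd) (hNC : NonCrossing (P ∪ Pd))
    (hcard : P.card + Pd.card = n) : IsNCPair (n - 1) (collapse x P) (collapse x Pd) := by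
  have hNC' : NonCrossing (collapse x P ∪ collapse x Pd) := by
    rw [collapse, collapse, ← image_union]
    refine hNC.image_of_strictMonoOn (strictMonoOn_closeGap_erase hx) fun B hB => ?_
    rw [coe_subset]
    rcases mem_union.mp hB with hB | hB
    exacts [(hP.subset_ground hB).trans subset_union_left,
      (hPd.subset_ground hB).trans subset_union_right]
  refine ⟨?_, hNC'.mono subset_union_left, ?_, hNC'.mono subset_union_right, hNC', ?_⟩
  · rw [← image_closeGap_oddSet_erase hx]
    exact hP.image (injOn_closeGap_oddSet_erase hx)
  · rw [← image_closeGap_evenSet_erase hx]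
    exact hPd.image (injOn_closeGap_evenSet_erase hx)
  · rw [collapse, collapse, hP.card_image (injOn_closeGap_oddSet_erase hx),
      hPd.card_image (injOn_closeGap_evenSet_erase hx)]
    have := mem_oddSet.mp hx
    omega

end Collapse

section KrewerasBound

def ParityHomogeneous (P : Finset (Finset ℕ)) : Prop :=
  ∀ B ∈ P, ∀ a ∈ B, ∀ b ∈ B, a % 2 = b % 2

lemma parityHomogeneous_union {n : ℕ} {σ ρ : Finset (Finset ℕ)} (hσ : IsPartitionOf (oddSet n) σ)
    (hρ : IsPartitionOf (evenSet n) ρ) : ParityHomogeneous (σ ∪ ρ) := by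
  intro B hB a ha b hb
  rcases mem_union.mp hB with hB | hB
  · rw [(mem_oddSet.mp (hσ.subset_ground hB ha)).1, (mem_oddSet.mp (hσ.subset_ground hB hb)).1]
  · rw [(mem_evenSet.mp (hρ.subset_ground hB ha)).1, (mem_evenSet.mp (hρ.subset_ground hB hb)).1]

/-- A shortest chord `a < b` of a block leaves `a + 1` in a block strictly inside `(a, b)`, whose
chords are shorter: so some block is a singleton. -/
lemma exists_singleton_mem_of_nonCrossing {n : ℕ} (hn : 1 ≤ n) {P : Finset (Finset ℕ)}
    (hP : IsPartitionOf (Icc 1 (2 * n)) P) (hNC : NonCrossing P) (hpar : ParityHomogeneous P) :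
    ∃ u, ({u} : Finset ℕ) ∈ P := by
  have key : ∀ d, ∀ B ∈ P, ∀ a ∈ B, ∀ b ∈ B, a < b → b - a ≤ d → ∃ u, ({u} : Finset ℕ) ∈ P := by
    intro d
    induction d using Nat.strong_induction_on with
    | _ d ih =>
    intro B hB a ha b hb hab hd
    have hpab := hpar B hB a ha b hb
    have ha1 := mem_Icc.mp (hP.subset_ground hB ha)
    have hb1 := mem_Icc.mp (hP.subset_ground hB hb)
    obtain ⟨C, hC, hC1⟩ := hP.exists_mem (mem_Icc.mpr (by omega) : a + 1 ∈ Icc 1 (2 * n))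
    have hCB : C ≠ B := fun h => by
      have := hpar B hB a ha (a + 1) (h ▸ hC1); omega
    by_cases hsing : ({a + 1} : Finset ℕ) ∈ P
    · exact ⟨a + 1, hsing⟩
    obtain ⟨C', hC', hC'1, z, hz, hz1⟩ := hP.exists_mem_ne (hP.subset_ground hC hC1) hsing
    rw [hP.eq_of_mem hC' hC hC'1 hC1] at hz
    have hza : z ≠ a := fun h => hCB (hP.eq_of_mem hC hB hz (h ▸ ha))
    have hzb : z ≠ b := fun h => hCB (hP.eq_of_mem hC hB hz (h ▸ hb))
    have hz_gt : a < z := by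
      by_contra! h
      exact hCB (hNC z a (a + 1) b (by omega) (by omega) (by omega) C hC B hB hz hC1 ha hb)
    have hz_lt : z < b := by
      by_contra! h
      exact hCB (hNC a (a + 1) b z (by omega) (by omega) (by omega) B hB C hC ha hb hC1 hz).symm
    rcases lt_or_gt_of_ne hz1 with h | h
    · exact ih (a + 1 - z) (by omega) C hC z hz (a + 1) hC1 h le_rfl
    · exact ih (z - (a + 1)) (by omega) C hC (a + 1) hC1 z hz h le_rfl
  have h1 : 1 ∈ Icc 1 (2 * n) := mem_Icc.mpr ⟨le_rfl, by omega⟩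
  by_cases hsing : ({1} : Finset ℕ) ∈ P
  · exact ⟨1, hsing⟩
  obtain ⟨B, hB, h1B, y, hy, hy1⟩ := hP.exists_mem_ne h1 hsing
  have := mem_Icc.mp (hP.subset_ground hB hy)
  exact key (y - 1) B hB 1 h1B y hy (by omega) le_rfl

lemma card_deletePoint_deletePoint_lt {P : Finset (Finset ℕ)} {u p q : ℕ}
    (hu : ({u} : Finset ℕ) ∈ P) (hupq : u = p ∨ u = q) :
    (deletePoint (deletePoint P p) q).card < P.card := by
  set g : Finset ℕ → Finset ℕ := fun B => (B.erase p).erase q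
  have hsub : deletePoint (deletePoint P p) q ⊆ (P.image g).erase ∅ := by
    intro D hD
    obtain ⟨hD0, D', hD', rfl⟩ := mem_deletePoint.mp hD
    obtain ⟨-, B, hB, rfl⟩ := mem_deletePoint.mp hD'
    exact mem_erase.mpr ⟨hD0, mem_image_of_mem g hB⟩
  have hempty : ∅ ∈ P.image g :=
    mem_image.mpr ⟨{u}, hu, eq_empty_of_forall_notMem fun z hz => by
      simp only [g, mem_erase, mem_singleton] at hz
      omega⟩
  calc (deletePoint (deletePoint P p) q).card ≤ ((P.image g).erase ∅).card := card_le_card hsub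
    _ < (P.image g).card := card_erase_lt_of_mem hempty
    _ ≤ P.card := card_image_le

lemma ParityHomogeneous.collapse {P : Finset (Finset ℕ)} (hpar : ParityHomogeneous P)
    {p : ℕ} (hp : ∀ B ∈ P, ∀ z ∈ B, z ≠ p ∧ z ≠ p + 1) : ParityHomogeneous (collapse p P) := by
  intro B' hB' a' ha' b' hb'
  obtain ⟨B, hB, rfl⟩ := mem_image.mp hB'
  obtain ⟨a, ha, rfl⟩ := mem_image.mp ha'
  obtain ⟨b, hb, rfl⟩ := mem_image.mp hb'
  have := hpar B hB a ha b hb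
  have := hp B hB a ha
  have := hp B hB b hb
  unfold closeGap
  split_ifs <;> omega

/-- The Kreweras bound. Deleting a singleton block and a neighbouring point, and closing the gap,
loses at least one block. -/
theorem add_one_le_card_of_nonCrossing {n : ℕ} (hn : 1 ≤ n) {P : Finset (Finset ℕ)}
    (hP : IsPartitionOf (Icc 1 (2 * n)) P) (hNC : NonCrossing P) (hpar : ParityHomogeneous P) :
    n + 1 ≤ P.card := by
  induction n, hn using Nat.le_induction generalizing P with
  | base =>
    obtain ⟨B, hB, h1⟩ := hP.exists_mem (by decide : 1 ∈ Icc 1 (2 * 1))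
    obtain ⟨C, hC, h2⟩ := hP.exists_mem (by decide : 2 ∈ Icc 1 (2 * 1))
    have hBC : B ≠ C := fun h => by have := hpar B hB 1 h1 2 (h ▸ h2); omega
    exact one_lt_card.mpr ⟨B, hB, C, hC, hBC⟩
  | succ n hn ih =>
    obtain ⟨u, hu⟩ := exists_singleton_mem_of_nonCrossing (by omega) hP hNC hpar
    have hu' := mem_Icc.mp (hP.subset_ground hu (mem_singleton_self u))
    obtain ⟨p, hp1, hp2, hup⟩ : ∃ p, 1 ≤ p ∧ p + 1 ≤ 2 * (n + 1) ∧ (u = p ∨ u = p + 1) := by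
      rcases lt_or_ge u (2 * (n + 1)) with h | h
      · exact ⟨u, by omega, by omega, Or.inl rfl⟩
      · exact ⟨u - 1, by omega, by omega, Or.inr (by omega)⟩
    set Q := deletePoint (deletePoint P p) (p + 1)
    have hground : ((Icc 1 (2 * (n + 1))).erase p).erase (p + 1) =
        Icc 1 (2 * (n + 1)) \ {p, p + 1} := by
      ext z; simp only [mem_erase, mem_sdiff, mem_insert, mem_singleton]; tauto
    have hQ : IsPartitionOf (Icc 1 (2 * (n + 1)) \ {p, p + 1}) Q :=
      hground ▸ (hP.deletePoint p).deletePoint (p + 1)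
    have hQS : ∀ B ∈ Q, ↑B ⊆ {y : ℕ | y ≠ p ∧ y ≠ p + 1} := fun B hB =>
      (coe_subset.mpr (hQ.subset_ground hB)).trans (coe_sdiff_pair_subset _ p)
    have hmono := strictMonoOn_closeGap p
    have hinj := (hmono.mono (coe_sdiff_pair_subset (Icc 1 (2 * (n + 1))) p)).injOn
    have hQpar : ParityHomogeneous Q := by
      intro B hB a ha b hb
      obtain ⟨-, B', hB', rfl⟩ := mem_deletePoint.mp hB
      obtain ⟨-, B'', hB'', rfl⟩ := mem_deletePoint.mp hB'
      exact hpar B'' hB'' a (mem_of_mem_erase (mem_of_mem_erase ha)) b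
        (mem_of_mem_erase (mem_of_mem_erase hb))
    have hbound := ih (image_closeGap_Icc (n := n + 1) hp1 hp2 ▸ hQ.image hinj)
      (((hNC.deletePoint p).deletePoint (p + 1)).image_of_strictMonoOn hmono hQS)
      (hQpar.collapse fun B hB z hz => hQS B hB hz)
    rw [hQ.card_image hinj] at hbound
    have hlt : Q.card < P.card := card_deletePoint_deletePoint_lt hu hup
    omega

end KrewerasBound

section Neighbours

/-- The even point preceding the odd point `x` in the cyclic order of `{1, …, 2n}`. -/
def cyclicPred (n x : ℕ) : ℕ := if x = 1 then 2 * n else x - 1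

variable {n x : ℕ} {τ τd : Finset (Finset ℕ)}

lemma cyclicPred_mem_evenSet (hx : x ∈ oddSet n) : cyclicPred n x ∈ evenSet n := by
  have := mem_oddSet.mp hx
  rw [mem_evenSet, cyclicPred]
  split_ifs <;> omega

lemma add_one_mem_evenSet (hx : x ∈ oddSet n) : x + 1 ∈ evenSet n := by
  have := mem_oddSet.mp hx
  rw [mem_evenSet]
  omega

lemma cyclicPred_ne_add_one (hn : 2 ≤ n) (hx : x ∈ oddSet n) : cyclicPred n x ≠ x + 1 := by
  have := mem_oddSet.mp hx
  rw [cyclicPred]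
  split_ifs <;> omega

lemma cyclicPred_adjacent (hn : 2 ≤ n) (hx : x ∈ oddSet n) :
    (cyclicPred n x < x + 1 ∧ ∀ z ∈ (Icc 1 (2 * n)).erase x, z ≤ cyclicPred n x ∨ x + 1 ≤ z) ∨
      (x + 1 < cyclicPred n x ∧
        ∀ z ∈ (Icc 1 (2 * n)).erase x, x + 1 ≤ z ∧ z ≤ cyclicPred n x) := by
  have := mem_oddSet.mp hx
  by_cases h1 : x = 1
  · refine Or.inr ⟨?_, fun z hz => ?_⟩ <;>
      simp only [cyclicPred, if_pos h1, mem_erase, mem_Icc] at * <;> omega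
  · refine Or.inl ⟨?_, fun z hz => ?_⟩ <;>
      simp only [cyclicPred, if_neg h1, mem_erase, mem_Icc] at * <;> omega

lemma IsNCPair.nonCrossing_deletePoint_union (hτ : IsNCPair n τ τd) (hx : x ∈ oddSet n) :
    NonCrossing (deletePoint τ x ∪ τd) := by
  refine (hτ.2.2.2.2.1.image_erase x).mono fun D hD => ?_
  rcases mem_union.mp hD with hD | hD
  · obtain ⟨-, B, hB, rfl⟩ := mem_deletePoint.mp hD
    exact mem_image_of_mem _ (mem_union_left _ hB)
  · refine mem_image.mpr ⟨D, mem_union_right _ hD, erase_eq_of_notMem fun hxD => ?_⟩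
    exact disjoint_left.mp (disjoint_oddSet_evenSet n) hx (hτ.2.2.1.subset_ground hD hxD)

lemma IsNCPair.nonCrossing_deletePoint_union_mergeBlocks (hτ : IsNCPair n τ τd) (hn : 2 ≤ n)
    (hx : x ∈ oddSet n) {Cl Cr : Finset ℕ} (hCl : Cl ∈ τd) (hCr : Cr ∈ τd)
    (hl : cyclicPred n x ∈ Cl) (hr : x + 1 ∈ Cr) :
    NonCrossing (deletePoint τ x ∪ mergeBlocks τd Cl Cr) := by
  have := mem_oddSet.mp hx
  have hdisj : Disjoint ((oddSet n).erase x) (evenSet n) :=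
    disjoint_of_subset_left (erase_subset x _) (disjoint_oddSet_evenSet n)
  have hground : (oddSet n).erase x ∪ evenSet n = (Icc 1 (2 * n)).erase x := by
    ext z
    simp only [mem_union, mem_erase, mem_Icc, mem_oddSet, mem_evenSet]
    omega
  have hR : IsPartitionOf ((Icc 1 (2 * n)).erase x) (deletePoint τ x ∪ τd) :=
    hground ▸ (hτ.1.deletePoint x).union hτ.2.2.1 hdisj
  have hM := (hτ.nonCrossing_deletePoint_union hx).mergeBlocks_of_adjacent hR
    (mem_union_right _ hCl) (mem_union_right _ hCr) hl hr (cyclicPred_adjacent hn hx)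
  refine hM.mono fun D hD => mem_mergeBlocks.mpr ?_
  rcases mem_union.mp hD with hD | hD
  · have hne := fun {C} hC => (hτ.1.deletePoint x).ne_of_disjoint hτ.2.2.1 hdisj hD (C := C) hC
    exact Or.inr ⟨mem_union_left _ hD, hne hCl, hne hCr⟩
  · rcases mem_mergeBlocks.mp hD with rfl | ⟨hD, hDl, hDr⟩
    exacts [Or.inl rfl, Or.inr ⟨mem_union_right _ hD, hDl, hDr⟩]

/-- Otherwise merging the two dual blocks would leave `n` blocks in `σ ∪ σd`, against the
Kreweras bound. -/
lemma IsNCPair.dual_block_eq_of_singleton_mem {σ σd : Finset (Finset ℕ)} (hσ : IsNCPair n σ σd)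
    (hn : 2 ≤ n) (hxσ : ({x} : Finset ℕ) ∈ σ) {Cl Cr : Finset ℕ} (hCl : Cl ∈ σd)
    (hCr : Cr ∈ σd) (hl : cyclicPred n x ∈ Cl) (hr : x + 1 ∈ Cr) : Cl = Cr := by
  by_contra hne
  have hx : x ∈ oddSet n := hσ.1.subset_ground hxσ (mem_singleton_self x)
  set ρ := mergeBlocks σd Cl Cr
  have hρ : IsPartitionOf (evenSet n) ρ := hσ.2.2.1.mergeBlocks hCl hCr
  have hρcard : ρ.card + 1 = σd.card := card_mergeBlocks hσ.2.2.1 hCl hCr hne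
  have hU : IsPartitionOf (Icc 1 (2 * n)) (σ ∪ ρ) :=
    oddSet_union_evenSet n ▸ hσ.1.union hρ (disjoint_oddSet_evenSet n)
  have hNC : NonCrossing (σ ∪ ρ) := by
    refine ((hσ.nonCrossing_deletePoint_union_mergeBlocks hn hx hCl hCr hl hr).insert_singleton
      x).mono fun D hD => ?_
    rw [deletePoint_of_singleton_mem hσ.1 hxσ, mem_insert, mem_union, mem_erase]
    rw [mem_union] at hD
    tauto
  have hbound := add_one_le_card_of_nonCrossing (by omega) hU hNC
    (parityHomogeneous_union hσ.1 hρ)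
  rw [hσ.1.card_union hρ (disjoint_oddSet_evenSet n)] at hbound
  have := hσ.2.2.2.2.2
  omega

/-- The block of `x` in `τ` separates the two neighbours of `x`. -/
lemma IsNCPair.dual_block_ne_of_singleton_notMem (hτ : IsNCPair n τ τd)
    (hx : x ∈ oddSet n) (hxτ : ({x} : Finset ℕ) ∉ τ) {Cl Cr : Finset ℕ} (hCl : Cl ∈ τd)
    (hCr : Cr ∈ τd) (hl : cyclicPred n x ∈ Cl) (hr : x + 1 ∈ Cr) : Cl ≠ Cr := by
  rintro rfl
  obtain ⟨B, hB, hxB, b₀, hb₀, hb₀x⟩ := hτ.1.exists_mem_ne hx hxτ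
  have hBC : B ≠ Cl := hτ.1.ne_of_disjoint hτ.2.2.1 (disjoint_oddSet_evenSet n) hB hCl
  have hb₀' := mem_oddSet.mp (hτ.1.subset_ground hB hb₀)
  have hx' := mem_oddSet.mp hx
  have hNC := hτ.2.2.2.2.1
  have hBu : B ∈ τ ∪ τd := mem_union_left _ hB
  have hCu : Cl ∈ τ ∪ τd := mem_union_right _ hCl
  unfold cyclicPred at hl
  split_ifs at hl with h1
  · subst h1
    exact hBC (hNC 1 2 b₀ (2 * n) (by omega) (by omega) (by omega) B hBu Cl hCu hxB hb₀ hr hl)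
  · rcases lt_or_gt_of_ne hb₀x with h | h
    · exact hBC (hNC b₀ (x - 1) x (x + 1) (by omega) (by omega) (by omega) B hBu Cl hCu hb₀ hxB
        hl hr)
    · exact hBC (hNC (x - 1) x (x + 1) b₀ (by omega) (by omega) (by omega) Cl hCu B hBu hl hr
        hxB hb₀).symm

end Neighbours

section Duality

variable {n x : ℕ} {τ τd σ σd : Finset (Finset ℕ)}

lemma add_one_notMem_of_mem_deletePoint (hτ : IsPartitionOf (oddSet n) τ) (hx : x ∈ oddSet n)
    {D : Finset ℕ} (hD : D ∈ deletePoint τ x) : x + 1 ∉ D := fun h => by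
  have := mem_oddSet.mp (mem_of_mem_erase ((hτ.deletePoint x).subset_ground hD h))
  have := mem_oddSet.mp hx
  omega

lemma IsNCPair.collapse_of_singleton_mem (hσ : IsNCPair n σ σd) (hxσ : ({x} : Finset ℕ) ∈ σ)
    (hrσd : ({x + 1} : Finset ℕ) ∉ σd) :
    IsNCPair (n - 1) (collapse x (deletePoint σ x)) (collapse x (deletePoint σd (x + 1))) := by
  have hx : x ∈ oddSet n := hσ.1.subset_ground hxσ (mem_singleton_self x)
  refine isNCPair_collapse hx (hσ.1.deletePoint x) (hσ.2.2.1.deletePoint (x + 1))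
    ((hσ.nonCrossing_deletePoint_union hx).union_deletePoint
      fun D hD => add_one_notMem_of_mem_deletePoint hσ.1 hx hD) ?_
  rw [deletePoint_of_singleton_mem hσ.1 hxσ, card_erase_of_mem hxσ,
    card_deletePoint_of_singleton_notMem hσ.2.2.1 hrσd]
  have := card_pos.mpr ⟨_, hxσ⟩
  have := hσ.2.2.2.2.2
  omega

lemma IsNCPair.collapse_of_mergeBlocks (hτ : IsNCPair n τ τd) (hn : 2 ≤ n) (hx : x ∈ oddSet n)
    (hxτ : ({x} : Finset ℕ) ∉ τ) {Cl Cr : Finset ℕ} (hCl : Cl ∈ τd) (hCr : Cr ∈ τd)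
    (hl : cyclicPred n x ∈ Cl) (hr : x + 1 ∈ Cr) (hne : Cl ≠ Cr) :
    IsNCPair (n - 1) (collapse x (deletePoint τ x))
      (collapse x (deletePoint (mergeBlocks τd Cl Cr) (x + 1))) := by
  have hM := hτ.2.2.1.mergeBlocks hCl hCr
  have hrM : ({x + 1} : Finset ℕ) ∉ mergeBlocks τd Cl Cr :=
    hM.singleton_notMem (mem_mergeBlocks.mpr (Or.inl rfl)) (mem_union_left _ hl)
      (mem_union_right _ hr) (cyclicPred_ne_add_one hn hx)
  refine isNCPair_collapse hx (hτ.1.deletePoint x) (hM.deletePoint (x + 1))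
    ((hτ.nonCrossing_deletePoint_union_mergeBlocks hn hx hCl hCr hl hr).union_deletePoint
      fun D hD => add_one_notMem_of_mem_deletePoint hτ.1 hx hD) ?_
  rw [card_deletePoint_of_singleton_notMem hτ.1 hxτ, card_deletePoint_of_singleton_notMem hM hrM]
  have := card_mergeBlocks hτ.2.2.1 hCl hCr hne
  have := hτ.2.2.2.2.2
  omega

/-- One induction step for the duality of connectivity: when `{x}` is a block of `σ`, delete `x`
and `x + 1`, merging on the side of `τ` the dual blocks around `x`. -/
lemma IsNCPair.joinConnectedOn_dual_of_singleton_mem (hn : 2 ≤ n) (hτ : IsNCPair n τ τd)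
    (hσ : IsNCPair n σ σd) (hcard : τ.card + σ.card = n + 1)
    (hconn : JoinConnectedOn (oddSet n) τ σ) (hxσ : ({x} : Finset ℕ) ∈ σ)
    (IH : ∀ τ' τd' σ' σd' : Finset (Finset ℕ), IsNCPair (n - 1) τ' τd' →
      IsNCPair (n - 1) σ' σd' → τ'.card + σ'.card = n →
      JoinConnectedOn (oddSet (n - 1)) τ' σ' → JoinConnectedOn (evenSet (n - 1)) τd' σd') :
    JoinConnectedOn (evenSet n) τd σd := by
  have hx : x ∈ oddSet n := hσ.1.subset_ground hxσ (mem_singleton_self x)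
  have hlE := cyclicPred_mem_evenSet hx
  have hrE := add_one_mem_evenSet hx
  have hlr := cyclicPred_ne_add_one hn hx
  obtain ⟨y, hy, hyx⟩ := exists_mem_ne (by rw [card_oddSet]; omega : 1 < (oddSet n).card) x
  have hxτ : ({x} : Finset ℕ) ∉ τ := fun h =>
    not_joinConnectedOn_of_singleton_mem hτ.1 hσ.1 h hxσ hy hyx hconn
  obtain ⟨B, hB, hxB, b₀, hb₀, hb₀x⟩ := hτ.1.exists_mem_ne hx hxτ
  obtain ⟨Cl, hCl, hlCl⟩ := hτ.2.2.1.exists_mem hlE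
  obtain ⟨Cr, hCr, hrCr⟩ := hτ.2.2.1.exists_mem hrE
  have hne := hτ.dual_block_ne_of_singleton_notMem hx hxτ hCl hCr hlCl hrCr
  obtain ⟨C, hC, hlC⟩ := hσ.2.2.1.exists_mem hlE
  obtain ⟨C', hC', hrC'⟩ := hσ.2.2.1.exists_mem hrE
  have hrC : x + 1 ∈ C := hσ.dual_block_eq_of_singleton_mem hn hxσ hC hC' hlC hrC' ▸ hrC'
  have hM := hτ.2.2.1.mergeBlocks hCl hCr
  have hσd' := hσ.2.2.1.deletePoint (x + 1)
  have hconn' : JoinConnectedOn (oddSet (n - 1)) (collapse x (deletePoint τ x))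
      (collapse x (deletePoint σ x)) := by
    rw [← image_closeGap_oddSet_erase hx]
    refine (joinConnectedOn_deletePoint (Or.inl hB) hb₀ hb₀x ?_ hconn).image (closeGap x)
    rintro D (hD | hD) hxD
    exacts [Or.inr (hτ.1.eq_of_mem hD hB hxD hxB),
      Or.inl (hσ.1.eq_of_mem hD hxσ hxD (mem_singleton_self x))]
  have hdual := IH _ _ _ _ (hτ.collapse_of_mergeBlocks hn hx hxτ hCl hCr hlCl hrCr hne)
    (hσ.collapse_of_singleton_mem hxσ (hσ.2.2.1.singleton_notMem hC hlC hrC hlr)) ?_ hconn'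
  · rw [← image_closeGap_evenSet_erase hx] at hdual
    have hback := (joinConnectedOn_image_iff (injOn_closeGap_evenSet_erase hx)
      (hM.deletePoint (x + 1)) hσd').mp hdual
    exact joinConnectedOn_of_mergeBlocks hCl hCr hlCl hrCr ⟨C, Or.inr hC, hlC, hrC⟩
      (joinConnectedOn_of_deletePoint hlE hlr ⟨C, Or.inr hC, hrC, hlC⟩ hback)
  · rw [collapse, collapse, (hτ.1.deletePoint x).card_image (injOn_closeGap_oddSet_erase hx),
      (hσ.1.deletePoint x).card_image (injOn_closeGap_oddSet_erase hx),
      card_deletePoint_of_singleton_notMem hτ.1 hxτ, deletePoint_of_singleton_mem hσ.1 hxσ,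
      card_erase_of_mem hxσ]
    have := card_pos.mpr ⟨_, hxσ⟩
    omega

end Duality

/-- Induction on `n`, deleting a singleton block, which exists by counting blocks. -/
theorem IsNCPair.joinConnectedOn_dual {n : ℕ} {τ τd σ σd : Finset (Finset ℕ)}
    (hτ : IsNCPair n τ τd) (hσ : IsNCPair n σ σd) (hcard : τ.card + σ.card = n + 1)
    (hconn : JoinConnectedOn (oddSet n) τ σ) : JoinConnectedOn (evenSet n) τd σd := by
  induction n using Nat.strong_induction_on generalizing τ τd σ σd with
  | _ n ih =>
  rcases lt_or_ge n 2 with hn | hn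
  · intro u hu v hv
    have := mem_evenSet.mp hu
    have := mem_evenSet.mp hv
    obtain rfl : u = v := by omega
    exact .refl
  have IH : ∀ τ' τd' σ' σd' : Finset (Finset ℕ), IsNCPair (n - 1) τ' τd' →
      IsNCPair (n - 1) σ' σd' → τ'.card + σ'.card = n →
      JoinConnectedOn (oddSet (n - 1)) τ' σ' → JoinConnectedOn (evenSet (n - 1)) τd' σd' :=
    fun _ _ _ _ h₁ h₂ h₃ h₄ => ih (n - 1) (by omega) h₁ h₂ (by omega) h₄
  obtain ⟨x, hx | hx⟩ := exists_singleton_mem_of_card_add_card hτ.1 hσ.1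
    (by rw [card_oddSet]; omega)
  · exact joinConnectedOn_comm.mp (hσ.joinConnectedOn_dual_of_singleton_mem hn hτ (by omega)
      (joinConnectedOn_comm.mp hconn) hx IH)
  · exact hτ.joinConnectedOn_dual_of_singleton_mem hn hσ hcard hconn hx IH

def mirror (n : ℕ) (P : Finset (Finset ℕ)) : Finset (Finset ℕ) :=
  P.image (Finset.image fun y => 2 * n + 1 - y)

section Mirror

variable {n : ℕ}

lemma strictAntiOn_mirror : StrictAntiOn (fun y => 2 * n + 1 - y) ↑(Icc 1 (2 * n)) := by
  intro a ha b hb hab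
  simp only [coe_Icc, Set.mem_Icc] at ha hb
  dsimp only
  omega

lemma image_mirror_oddSet : (oddSet n).image (fun y => 2 * n + 1 - y) = evenSet n := by
  ext y
  simp only [mem_image, mem_oddSet, mem_evenSet]
  exact ⟨fun ⟨z, hz, hzy⟩ => by omega, fun hy => ⟨2 * n + 1 - y, by omega, by omega⟩⟩

lemma image_mirror_evenSet : (evenSet n).image (fun y => 2 * n + 1 - y) = oddSet n := by
  ext y
  simp only [mem_image, mem_oddSet, mem_evenSet]
  exact ⟨fun ⟨z, hz, hzy⟩ => by omega, fun hy => ⟨2 * n + 1 - y, by omega, by omega⟩⟩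

lemma injOn_mirror_oddSet : Set.InjOn (fun y => 2 * n + 1 - y) ↑(oddSet n) := by
  refine (strictAntiOn_mirror.mono ?_).injOn
  rw [← oddSet_union_evenSet, coe_union]
  exact Set.subset_union_left

lemma injOn_mirror_evenSet : Set.InjOn (fun y => 2 * n + 1 - y) ↑(evenSet n) := by
  refine (strictAntiOn_mirror.mono ?_).injOn
  rw [← oddSet_union_evenSet, coe_union]
  exact Set.subset_union_right

lemma isNCPair_mirror {σ σd : Finset (Finset ℕ)} (h : IsNCPair n σ σd) :
    IsNCPair n (mirror n σd) (mirror n σ) := by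
  obtain ⟨hσ, -, hσd, -, hNC, hcard⟩ := h
  have hNC' : NonCrossing (mirror n σd ∪ mirror n σ) := by
    rw [mirror, mirror, ← image_union, union_comm]
    refine hNC.image_of_strictAntiOn strictAntiOn_mirror fun B hB => ?_
    rw [coe_subset, ← oddSet_union_evenSet]
    rcases mem_union.mp hB with hB | hB
    exacts [(hσ.subset_ground hB).trans subset_union_left,
      (hσd.subset_ground hB).trans subset_union_right]
  refine ⟨?_, hNC'.mono subset_union_left, ?_, hNC'.mono subset_union_right, hNC', ?_⟩
  · exact image_mirror_evenSet ▸ hσd.image injOn_mirror_evenSet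
  · exact image_mirror_oddSet ▸ hσ.image injOn_mirror_oddSet
  · rw [mirror, mirror, hσd.card_image injOn_mirror_evenSet,
      hσ.card_image injOn_mirror_oddSet]
    omega

end Mirror

/-- The converse of `IsNCPair.joinConnectedOn_dual`, by the reflection `y ↦ 2n + 1 - y`, which
exchanges the roles of partitions and duals. -/
theorem IsNCPair.joinConnectedOn_of_dual {n : ℕ} {τ τd σ σd : Finset (Finset ℕ)}
    (hτ : IsNCPair n τ τd) (hσ : IsNCPair n σ σd) (hcard : τ.card + σ.card = n + 1)
    (hconn : JoinConnectedOn (evenSet n) τd σd) : JoinConnectedOn (oddSet n) τ σ := by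
  have h := (isNCPair_mirror hτ).joinConnectedOn_dual (isNCPair_mirror hσ) ?_
    (image_mirror_evenSet ▸ hconn.image (fun y => 2 * n + 1 - y))
  · rw [← image_mirror_oddSet] at h
    exact (joinConnectedOn_image_iff injOn_mirror_oddSet hτ.1 hσ.1).mp h
  · rw [mirror, mirror, hτ.2.2.1.card_image injOn_mirror_evenSet,
      hσ.2.2.1.card_image injOn_mirror_evenSet]
    have := hτ.2.2.2.2.2
    have := hσ.2.2.2.2.2
    omega

/-- The pairing `⟨P, Q⟩` on a ground set `G`, with target block count `m`. -/
noncomputable def pairingOn (G : Finset ℕ) (m : ℕ) (P Q : Finset (Finset ℕ)) : ℝ :=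
  if P.card + Q.card = m ∧ JoinConnectedOn G P Q then 1 else 0

lemma pairing_eq_pairingOn (n : ℕ) (τ σ : Finset (Finset ℕ)) :
    pairing n τ σ = pairingOn (oddSet n) (n + 1) τ σ :=
  rfl

lemma pairing_eq_pairingOn_dual {n : ℕ} {τ τd σ σd : Finset (Finset ℕ)} (hτ : IsNCPair n τ τd)
    (hσ : IsNCPair n σ σd) : pairing n τ σ = pairingOn (evenSet n) (n + 1) τd σd := by
  have := hτ.2.2.2.2.2
  have := hσ.2.2.2.2.2
  refine if_congr ⟨fun ⟨hcard, hconn⟩ => ⟨by omega, hτ.joinConnectedOn_dual hσ hcard hconn⟩,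
    fun ⟨hcard, hconn⟩ => ⟨by omega, hτ.joinConnectedOn_of_dual hσ (by omega) hconn⟩⟩ rfl rfl

theorem pairingOn_isolate_comm {G : Finset ℕ} (hG : 1 < G.card) (m : ℕ)
    {P Q gP gQ : Finset (Finset ℕ)} (hP : IsPartitionOf G P) (hQ : IsPartitionOf G Q) {i : ℕ}
    (hi : i ∈ G) (hgP : ({i} : Finset ℕ) ∉ P → gP = isolate P i)
    (hgQ : ({i} : Finset ℕ) ∉ Q → gQ = isolate Q i) :
    (if ({i} : Finset ℕ) ∉ P then pairingOn G m gP Q else 0) =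
      (if ({i} : Finset ℕ) ∉ Q then pairingOn G m P gQ else 0) := by
  obtain ⟨y, hy, hyi⟩ := exists_mem_ne hG i
  by_cases hPi : ({i} : Finset ℕ) ∈ P <;> by_cases hQi : ({i} : Finset ℕ) ∈ Q <;>
    simp only [hPi, hQi, not_true, not_false_eq_true, if_true, if_false]
  · rw [hgQ hQi, pairingOn, if_neg fun h => not_joinConnectedOn_of_singleton_mem hP
      (hQ.isolate hi hQi) hPi (mem_insert_self _ _) hy hyi h.2]
  · rw [hgP hPi, pairingOn, if_neg fun h => not_joinConnectedOn_of_singleton_mem hQ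
      (hP.isolate hi hPi) hQi (mem_insert_self _ _) hy hyi (joinConnectedOn_comm.mp h.2)]
  · rw [hgP hPi, hgQ hQi, pairingOn, pairingOn, card_isolate hP hPi, card_isolate hQ hQi,
      joinConnectedOn_isolate_comm hP hQ hi hPi hQi, add_right_comm, add_assoc]

theorem lam_generators_self_adjoint (n : ℕ) (hn : 2 ≤ n) (i : ℕ) (hi1 : 1 ≤ i) (hi2 : i ≤ 2 * n)
    (τ τd σ σd gτ gτd gσ gσd : Finset (Finset ℕ))
    (hτ : IsNCPair n τ τd) (hσ : IsNCPair n σ σd)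
    (hgτp : IsNCPair n gτ gτd) (hgσp : IsNCPair n gσ gσd)
    (hgτ : GRel i τ τd gτ gτd) (hgσ : GRel i σ σd gσ gσd) :
    (if ¬ IsolatedIn τ τd i then pairing n gτ σ else 0) =
      (if ¬ IsolatedIn σ σd i then pairing n τ gσ else 0) := by
  rcases Nat.mod_two_eq_zero_or_one i with heven | hodd
  · have hiso : ∀ {ρ ρd}, IsolatedIn ρ ρd i ↔ ({i} : Finset ℕ) ∈ ρd := by
      simp [IsolatedIn, heven]
    rw [pairing_eq_pairingOn_dual hgτp hσ, pairing_eq_pairingOn_dual hτ hgσp, hiso, hiso]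
    convert pairingOn_isolate_comm (by rw [card_evenSet]; omega) (n + 1) hτ.2.2.1 hσ.2.2.1
      (mem_evenSet.mpr ⟨heven, hi1, hi2⟩) (fun h => (hgτ.2 (hiso.not.mpr h)).2 heven)
      (fun h => (hgσ.2 (hiso.not.mpr h)).2 heven)
  · have hiso : ∀ {ρ ρd}, IsolatedIn ρ ρd i ↔ ({i} : Finset ℕ) ∈ ρ := by
      simp [IsolatedIn, hodd]
    rw [pairing_eq_pairingOn, pairing_eq_pairingOn, hiso, hiso]
    convert pairingOn_isolate_comm (by rw [card_oddSet]; omega) (n + 1) hτ.1 hσ.1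
      (mem_oddSet.mpr ⟨hodd, by omega⟩) (fun h => (hgτ.2 (hiso.not.mpr h)).1 hodd)
      (fun h => (hgσ.2 (hiso.not.mpr h)).1 hodd)
end

section
/- Let x be an n×n real matrix each of whose columns sums to zero (for instance a symmetric matrix with zero row sums, such as the response matrix of an electrical network). Then the alternating sum of the rows of Ω(x) vanishes: Σ_{i=1}^n (−1)^{i+1}·(row i of Ω(x)) = 0. In particular Ω(x) has rank at most n−1. -/
open Matrix

theorem alternating_sum_of_rows_of_Omega (n : ℕ) (hn : 2 ≤ n) (x : Matrix (Fin n) (Fin n) ℝ)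
    (hcol : ∀ j, ∑ i, x i j = 0) :
    (∑ i : Fin n, ((-1 : ℝ) ^ i.val) • OmegaMat n x i) = 0 ∧
      (OmegaMat n x).rank ≤ n - 1 := by
  classical
  haveI : NeZero n := ⟨by omega⟩
  have hsum : (∑ i : Fin n, ((-1 : ℝ) ^ i.val) • OmegaMat n x i) = 0 := by
    funext c
    simp only [Finset.sum_apply, Pi.smul_apply, smul_eq_mul, Pi.zero_apply]
    by_cases hc : c.val % 2 = 0
    · have key : ∀ r : Fin n, (-1:ℝ)^r.val * OmegaMat n x r c
          = (-1:ℝ)^(c.val/2) * x r ⟨c.val/2, by have := c.isLt; omega⟩ := by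
        intro r
        simp only [OmegaMat, hc, if_true]
        have h2 : (-1:ℝ)^r.val * (-1:ℝ)^r.val = 1 := by
          rw [← pow_add]; exact Even.neg_one_pow ⟨r.val, rfl⟩
        have h3 : (-1:ℝ)^r.val * (-1:ℝ)^(r.val + c.val/2) = (-1:ℝ)^(c.val/2) := by
          rw [pow_add, ← mul_assoc, h2, one_mul]
        rw [← mul_assoc, h3]
      rw [Finset.sum_congr rfl (fun r _ => key r), ← Finset.mul_sum,
        hcol, mul_zero]
    · set F : ℕ → ℝ := fun r => (-1:ℝ)^r * (if c.val = 2*r+1 then 1 else 0) with hF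
      have hterm : ∀ r : Fin n, (-1:ℝ)^r.val * OmegaMat n x r c
          = if r.val = 0 then F 0 - F (n-1) else F r.val - F (r.val - 1) := by
        intro r
        simp only [OmegaMat, hc, if_false, hF]
        by_cases hr : r.val = 0
        · simp only [hr, if_true, pow_zero, one_mul, Nat.mul_zero, Nat.zero_add]
          have h1 : 2*(n-1)+1 = 2*n-1 := by omega
          have h2 : (1:ℕ) ≠ 2*n-1 := by omega
          have hpow : (-1:ℝ)^n = -(-1:ℝ)^(n-1) := by
            conv_lhs => rw [show n = (n-1)+1 by omega]
            rw [pow_succ]; ring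
          rw [h1]
          split_ifs <;> first | (exfalso; omega) | ring1 | linear_combination hpow
        · simp only [hr, if_false]
          have h1 : 2*(r.val-1)+1 = 2*r.val - 1 := by omega
          have hpow : (-1:ℝ)^r.val = -(-1:ℝ)^(r.val-1) := by
            conv_lhs => rw [show r.val = (r.val-1)+1 by omega]
            rw [pow_succ]; ring
          rw [h1]
          split_ifs <;> first | (exfalso; omega) | ring1 | linear_combination hpow
      obtain ⟨m, rfl⟩ : ∃ m, n = m + 1 := ⟨n-1, by omega⟩
      calc ∑ r : Fin (m+1), (-1:ℝ)^r.val * OmegaMat (m+1) x r c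
          = ∑ r : Fin (m+1), (fun k : ℕ =>
              if k = 0 then F 0 - F (m+1-1) else F k - F (k-1)) r.val :=
            Finset.sum_congr rfl fun r _ => hterm r
        _ = ∑ k ∈ Finset.range (m+1),
              (if k = 0 then F 0 - F (m+1-1) else F k - F (k-1)) :=
            Fin.sum_univ_eq_sum_range (fun k : ℕ =>
              if k = 0 then F 0 - F (m+1-1) else F k - F (k-1)) (m+1)
        _ = 0 := by
            rw [Finset.sum_range_succ']
            simp only [Nat.succ_ne_zero, if_false, if_true, Nat.add_sub_cancel]
            rw [Finset.sum_range_sub (fun i => F i)]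
            ring
  refine ⟨hsum, ?_⟩
  have hrow : ∀ c, ∑ i : Fin n, (-1:ℝ)^i.val * OmegaMat n x i c = 0 := by
    intro c
    have := congrFun hsum c
    simpa [Finset.sum_apply] using this
  set f : (Fin n → ℝ) →ₗ[ℝ] ℝ := ∑ i : Fin n, (-1:ℝ)^i.val • LinearMap.proj i with hf
  have hfapp : ∀ w : Fin n → ℝ, f w = ∑ i : Fin n, (-1:ℝ)^i.val * w i := by
    intro w
    simp [hf, LinearMap.sum_apply]
  have hle : LinearMap.range (OmegaMat n x).mulVecLin ≤ LinearMap.ker f := by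
    rintro w ⟨v, rfl⟩
    simp only [LinearMap.mem_ker, hfapp, Matrix.mulVecLin_apply, Matrix.mulVec,
      dotProduct]
    calc ∑ i : Fin n, (-1:ℝ)^i.val * (∑ c, OmegaMat n x i c * v c)
        = ∑ i : Fin n, ∑ c, (-1:ℝ)^i.val * OmegaMat n x i c * v c := by
          refine Finset.sum_congr rfl fun i _ => ?_
          rw [Finset.mul_sum]
          exact Finset.sum_congr rfl fun c _ => by ring
      _ = ∑ c, ∑ i : Fin n, (-1:ℝ)^i.val * OmegaMat n x i c * v c :=
          Finset.sum_comm
      _ = ∑ c, (∑ i : Fin n, (-1:ℝ)^i.val * OmegaMat n x i c) * v c := by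
          exact Finset.sum_congr rfl fun c _ => (Finset.sum_mul ..).symm
      _ = 0 := by simp [hrow]
  have hfsurj : Function.Surjective f := by
    intro a
    refine ⟨Pi.single (0 : Fin n) a, ?_⟩
    simp [hfapp, Pi.single_apply]
  have hker : Module.finrank ℝ (LinearMap.ker f) = n - 1 := by
    have h1 : LinearMap.range f = ⊤ := LinearMap.range_eq_top.2 hfsurj
    have h2 := LinearMap.finrank_range_add_finrank_ker f
    rw [h1, finrank_top, Module.finrank_self, Module.finrank_fin_fun] at h2
    omega
  calc (OmegaMat n x).rank
      = Module.finrank ℝ (LinearMap.range (OmegaMat n x).mulVecLin) := rfl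
    _ ≤ Module.finrank ℝ (LinearMap.ker f) := Submodule.finrank_mono hle
    _ = n - 1 := hker
end
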